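/- arXiv:2403.10626 — 8 statements merged into one kernel-verified Lean document; each statement's English description precedes it below -/
import Mathlib

section
/- Let A be a symmetric n×n integer matrix whose diagonal entries are all even. Then there exists an integer matrix P with det(P) = ±1 such that P^T A P reduced modulo 4 is a block diagonal matrix of the form diag(r·[[2,1],[1,2]], s·[[0,1],[1,0]], t·[[0,2],[2,0]], p·[2], m·[0]) for some non-negative integers r, s, t, p, m (where k·M denotes k diagonal copies of the block M). -/
/-!
Reduce modulo 4 and write the matrix as `X + Xᵀ`, a shape that congruence preserves. An odd entry
lies off the diagonal, and the `2 × 2` block it spans has determinant `≡ -1`: it is invertible and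
congruent to `[[2,1],[1,2]]` or `[[0,1],[1,0]]`. If all entries are even, a diagonal `2` (block
`[2]`) or, when the diagonal vanishes, an off-diagonal `2` (block `[[0,2],[2,0]]`) is twice a
unimodular block, so it still divides the even entries next to it. Either way the column operation
`[[1, Z], [0, 1]]` splits the pivot block off as an orthogonal summand and induction on the size
treats the complement; a matrix `≡ 0` is already in normal form. Since congruence is taken up to
relabelling the indices, the blocks can be sorted into the order of the normal form at the end.
-/

/-- Entry `(i,j)` of the block diagonal matrix
`diag(r·[[2,1],[1,2]], s·[[0,1],[1,0]], t·[[0,2],[2,0]], p·[2], m·[0])`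
(the `m` trailing zero rows/columns are implicit: the entry is `0` there). -/
def nfEntry (r s t p : ℕ) (i j : ℕ) : ℤ :=
  if i < 2*r ∧ j < 2*r then (if i = j then 2 else if i / 2 = j / 2 then 1 else 0)
  else if 2*r ≤ i ∧ i < 2*r+2*s ∧ 2*r ≤ j ∧ j < 2*r+2*s then
    (if i ≠ j ∧ i / 2 = j / 2 then 1 else 0)
  else if 2*r+2*s ≤ i ∧ i < 2*r+2*s+2*t ∧ 2*r+2*s ≤ j ∧ j < 2*r+2*s+2*t then
    (if i ≠ j ∧ i / 2 = j / 2 then 2 else 0)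
  else if 2*r+2*s+2*t ≤ i ∧ i < 2*r+2*s+2*t+p ∧ i = j then 2
  else 0

open Matrix
open scoped Kronecker

universe u

section IntCong

variable {R : Type*} [CommRing R] {ι κ μ : Type*} [Fintype ι] [DecidableEq ι]

/-- Congruence by an integral unimodular matrix, up to a relabelling `e` of the indices; the
relabelling lets orthogonal summands be reordered freely. -/
def IntCong (A : Matrix ι ι R) (B : Matrix κ κ R) : Prop :=
  ∃ (e : ι ≃ κ) (P : Matrix ι ι ℤ), IsUnit P.det ∧
    (P.map (Int.castRingHom R))ᵀ * A * P.map (Int.castRingHom R) = B.submatrix e e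

theorem IntCong.of_conj {A B : Matrix ι ι R} (P : Matrix ι ι ℤ) (hP : IsUnit P.det)
    (h : (P.map (Int.castRingHom R))ᵀ * A * P.map (Int.castRingHom R) = B) : IntCong A B :=
  ⟨Equiv.refl ι, P, hP, by simpa using h⟩

theorem IntCong.of_eq_submatrix {A : Matrix ι ι R} {B : Matrix κ κ R} (e : ι ≃ κ)
    (h : A = B.submatrix e e) : IntCong A B :=
  ⟨e, 1, by simp, by simp [h]⟩

theorem IntCong.refl (A : Matrix ι ι R) : IntCong A A :=
  .of_conj 1 (by simp) (by simp)

theorem IntCong.trans [Fintype κ] [DecidableEq κ] {A : Matrix ι ι R} {B : Matrix κ κ R}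
    {C : Matrix μ μ R} (hAB : IntCong A B) (hBC : IntCong B C) : IntCong A C := by
  obtain ⟨e, P, hP, hPA⟩ := hAB
  obtain ⟨f, Q, hQ, hQB⟩ := hBC
  refine ⟨e.trans f, P * Q.submatrix e e, ?_, ?_⟩
  · rw [det_mul, det_submatrix_equiv_self]
    exact hP.mul hQ
  · set φ := Int.castRingHom R
    calc ((P * Q.submatrix e e).map φ)ᵀ * A * (P * Q.submatrix e e).map φ
        = ((Q.map φ).submatrix e e)ᵀ * ((P.map φ)ᵀ * A * P.map φ) * (Q.map φ).submatrix e e := by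
          simp only [Matrix.map_mul, transpose_mul, Matrix.mul_assoc]
          rfl
      _ = C.submatrix (e.trans f) (e.trans f) := by
        rw [hPA, transpose_submatrix, submatrix_mul_equiv, submatrix_mul_equiv, hQB,
          submatrix_submatrix]
        rfl

theorem IntCong.card_eq [Fintype κ] {A : Matrix ι ι R} {B : Matrix κ κ R} (h : IntCong A B) :
    Fintype.card ι = Fintype.card κ :=
  let ⟨e, _⟩ := h
  Fintype.card_congr e

theorem IntCong.fromBlocks_zero {ι' κ' : Type*} [Fintype ι'] [DecidableEq ι']
    {A : Matrix ι ι R} {B : Matrix κ κ R} {C : Matrix ι' ι' R} {D : Matrix κ' κ' R}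
    (hAB : IntCong A B) (hCD : IntCong C D) :
    IntCong (fromBlocks A 0 0 C) (fromBlocks B 0 0 D) := by
  obtain ⟨e, P, hP, hPA⟩ := hAB
  obtain ⟨f, Q, hQ, hQC⟩ := hCD
  refine ⟨e.sumCongr f, fromBlocks P 0 0 Q, ?_, ?_⟩
  · rw [det_fromBlocks_zero₂₁]
    exact hP.mul hQ
  · rw [fromBlocks_map, fromBlocks_transpose, fromBlocks_multiply, fromBlocks_multiply]
    simp only [Matrix.map_zero _ (map_zero _), transpose_zero, Matrix.zero_mul, Matrix.mul_zero,
      add_zero, zero_add, hPA, hQC]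
    ext (i | i) (j | j) <;> rfl

theorem IntCong.exists_add_transpose {A : Matrix ι ι R} {B : Matrix κ κ R} (h : IntCong A B)
    (hA : ∃ X, A = X + Xᵀ) : ∃ Y, B = Y + Yᵀ := by
  obtain ⟨e, P, -, hPA⟩ := h
  obtain ⟨X, rfl⟩ := hA
  set Q := P.map (Int.castRingHom R)
  refine ⟨(Qᵀ * X * Q).submatrix e.symm e.symm, ?_⟩
  calc B = (B.submatrix e e).submatrix e.symm e.symm := by simp
    _ = _ := by
      rw [← hPA, Matrix.mul_add, Matrix.add_mul, transpose_submatrix, transpose_mul, transpose_mul,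
        transpose_transpose, ← Matrix.mul_assoc]
      rfl

theorem IntCong.exists_conj_eq {A B : Matrix ι ι R} (h : IntCong A B) :
    ∃ P : Matrix ι ι ℤ, IsUnit P.det ∧
      (P.map (Int.castRingHom R))ᵀ * A * P.map (Int.castRingHom R) = B := by
  obtain ⟨e, P, hP, hPA⟩ := h
  refine ⟨P * (1 : Matrix ι ι ℤ).submatrix id e.symm, ?_, ?_⟩
  · rw [det_mul, det_permute', det_one, mul_one]
    exact hP.mul (Units.isUnit _)
  · set Q := (1 : Matrix ι ι R).submatrix (Equiv.refl ι) e.symm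
    have hQ : ((1 : Matrix ι ι ℤ).submatrix id e.symm).map (Int.castRingHom R) = Q := by
      rw [← submatrix_map, Matrix.map_one _ (map_zero _) (map_one _)]
      rfl
    calc _ = Qᵀ * ((P.map (Int.castRingHom R))ᵀ * A * P.map (Int.castRingHom R)) * Q := by
          simp only [Matrix.map_mul, hQ, transpose_mul, Matrix.mul_assoc]
      _ = B := by
          rw [hPA, transpose_submatrix, transpose_one, one_submatrix_mul, mul_submatrix_one]
          simp

theorem intCong_fromBlocks_of_mul_eq_neg {α β : Type*} [Fintype α] [Fintype β] [DecidableEq α]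
    [DecidableEq β] {B : Matrix α α R} (hB : B.IsSymm) (Y : Matrix α β R) (D : Matrix β β R)
    (Z : Matrix α β ℤ) (hZ : B * Z.map (Int.castRingHom R) = -Y) :
    IntCong (fromBlocks B Y Yᵀ D) (fromBlocks B 0 0 ((Z.map (Int.castRingHom R))ᵀ * Y + D)) := by
  refine .of_conj (fromBlocks 1 Z 0 1) (by simp) ?_
  rw [fromBlocks_map, Matrix.map_one _ (map_zero _) (map_one _), Matrix.map_zero _ (map_zero _)]
  generalize Z.map (Int.castRingHom R) = Z' at *
  have hZ' : Z'ᵀ * B = -Yᵀ := by rw [← hB.eq, ← transpose_mul, hZ, transpose_neg]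
  simp [fromBlocks_transpose, fromBlocks_multiply, hZ, hZ']

theorem intCong_fromBlocks_left_comm {α β γ : Type*} [Fintype α] [Fintype β] [Fintype γ]
    [DecidableEq α] [DecidableEq β] [DecidableEq γ]
    (A : Matrix α α R) (B : Matrix β β R) (C : Matrix γ γ R) :
    IntCong (fromBlocks A 0 0 (fromBlocks B 0 0 C)) (fromBlocks B 0 0 (fromBlocks A 0 0 C)) := by
  refine .of_eq_submatrix ((Equiv.sumAssoc α β γ).symm.trans
    (((Equiv.sumComm α β).sumCongr (Equiv.refl γ)).trans (Equiv.sumAssoc β α γ))) ?_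
  ext (x | x | x) (y | y | y) <;> simp

theorem intCong_fromBlocks_one_kronecker {d : ℕ} (K : Matrix (Fin d) (Fin d) R) (r : ℕ)
    {γ : Type*} [Fintype γ] [DecidableEq γ] (C : Matrix γ γ R) :
    IntCong (fromBlocks K 0 0 (fromBlocks ((1 : Matrix (Fin r) (Fin r) R) ⊗ₖ K) 0 0 C))
      (fromBlocks ((1 : Matrix (Fin (1 + r)) (Fin (1 + r)) R) ⊗ₖ K) 0 0 C) := by
  let e : Fin d ⊕ Fin r × Fin d ≃ Fin (1 + r) × Fin d :=
    ((Equiv.uniqueProd (Fin d) (Fin 1)).symm.sumCongr (Equiv.refl _)).trans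
      ((Equiv.sumProdDistrib (Fin 1) (Fin r) (Fin d)).symm.trans
        (finSumFinEquiv.prodCongr (Equiv.refl _)))
  refine .of_eq_submatrix ((Equiv.sumAssoc _ _ γ).symm.trans (e.sumCongr (Equiv.refl γ))) ?_
  ext (x | ⟨a, x⟩ | x) (y | ⟨b, y⟩ | y) <;>
    simp [e, one_apply, -finSumFinEquiv_apply_left, -finSumFinEquiv_apply_right]

end IntCong

section NormalForm

variable {R : Type*} [CommRing R] {ι : Type*} [Fintype ι] [DecidableEq ι]

abbrev NormalFormIndex (r s t p m : ℕ) : Type :=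
  Fin r × Fin 2 ⊕ Fin s × Fin 2 ⊕ Fin t × Fin 2 ⊕ Fin p × Fin 1 ⊕ Fin m

/-- `diag(r·[[2,1],[1,2]], s·[[0,1],[1,0]], t·[[0,2],[2,0]], p·[2], m·[0])`, where `k` copies of a
block `K` are the Kronecker product `1ₖ ⊗ K`. -/
def normalForm (R : Type*) [CommRing R] (r s t p m : ℕ) :
    Matrix (NormalFormIndex r s t p m) (NormalFormIndex r s t p m) R :=
  fromBlocks ((1 : Matrix (Fin r) (Fin r) R) ⊗ₖ !![2, 1; 1, 2]) 0 0 <|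
  fromBlocks ((1 : Matrix (Fin s) (Fin s) R) ⊗ₖ !![0, 1; 1, 0]) 0 0 <|
  fromBlocks ((1 : Matrix (Fin t) (Fin t) R) ⊗ₖ !![0, 2; 2, 0]) 0 0 <|
  fromBlocks ((1 : Matrix (Fin p) (Fin p) R) ⊗ₖ !![2]) 0 0 0

def HasNormalForm (A : Matrix ι ι R) : Prop :=
  ∃ r s t p m, IntCong A (normalForm R r s t p m)

theorem HasNormalForm.of_intCong {κ : Type*} [Fintype κ] [DecidableEq κ] {A : Matrix ι ι R}
    {B : Matrix κ κ R} (h : IntCong A B) (hB : HasNormalForm B) : HasNormalForm A := by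
  obtain ⟨r, s, t, p, m, hB⟩ := hB
  exact ⟨r, s, t, p, m, h.trans hB⟩

theorem hasNormalForm_zero : HasNormalForm (0 : Matrix ι ι R) := by
  have hzero (m : ℕ) : normalForm R 0 0 0 0 m = 0 := by
    ext (⟨⟨_, _⟩, -⟩ | ⟨⟨_, _⟩, -⟩ | ⟨⟨_, _⟩, -⟩ | ⟨⟨_, _⟩, -⟩ | a)
      (⟨⟨_, _⟩, -⟩ | ⟨⟨_, _⟩, -⟩ | ⟨⟨_, _⟩, -⟩ | ⟨⟨_, _⟩, -⟩ | b) <;> first | omega | rfl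
  exact ⟨0, 0, 0, 0, Fintype.card ι,
    .of_eq_submatrix (Fintype.equivOfCardEq (by simp)) (by rw [hzero]; rfl)⟩

section Absorb

variable {C : Matrix ι ι R}

theorem HasNormalForm.fromBlocks_A₂ (hC : HasNormalForm C) :
    HasNormalForm (fromBlocks !![(2 : R), 1; 1, 2] 0 0 C) := by
  obtain ⟨r, s, t, p, m, h⟩ := hC
  exact ⟨1 + r, s, t, p, m, ((IntCong.refl _).fromBlocks_zero h).trans
    (intCong_fromBlocks_one_kronecker _ _ _)⟩

theorem HasNormalForm.fromBlocks_hyperbolic (hC : HasNormalForm C) :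
    HasNormalForm (fromBlocks !![(0 : R), 1; 1, 0] 0 0 C) := by
  obtain ⟨r, s, t, p, m, h⟩ := hC
  exact ⟨r, 1 + s, t, p, m, ((IntCong.refl _).fromBlocks_zero h).trans <|
    (intCong_fromBlocks_left_comm _ _ _).trans <|
    (IntCong.refl _).fromBlocks_zero (intCong_fromBlocks_one_kronecker _ _ _)⟩

theorem HasNormalForm.fromBlocks_two_hyperbolic (hC : HasNormalForm C) :
    HasNormalForm (fromBlocks !![(0 : R), 2; 2, 0] 0 0 C) := by
  obtain ⟨r, s, t, p, m, h⟩ := hC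
  exact ⟨r, s, 1 + t, p, m, ((IntCong.refl _).fromBlocks_zero h).trans <|
    (intCong_fromBlocks_left_comm _ _ _).trans <| (IntCong.refl _).fromBlocks_zero <|
    (intCong_fromBlocks_left_comm _ _ _).trans <|
    (IntCong.refl _).fromBlocks_zero (intCong_fromBlocks_one_kronecker _ _ _)⟩

theorem HasNormalForm.fromBlocks_two (hC : HasNormalForm C) :
    HasNormalForm (fromBlocks !![(2 : R)] 0 0 C) := by
  obtain ⟨r, s, t, p, m, h⟩ := hC
  exact ⟨r, s, t, 1 + p, m, ((IntCong.refl _).fromBlocks_zero h).trans <|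
    (intCong_fromBlocks_left_comm _ _ _).trans <| (IntCong.refl _).fromBlocks_zero <|
    (intCong_fromBlocks_left_comm _ _ _).trans <| (IntCong.refl _).fromBlocks_zero <|
    (intCong_fromBlocks_left_comm _ _ _).trans <|
    (IntCong.refl _).fromBlocks_zero (intCong_fromBlocks_one_kronecker _ _ _)⟩

end Absorb

end NormalForm

section Pivot

variable {R : Type*} [CommRing R] {ι : Type u} [Fintype ι] [DecidableEq ι]

theorem HasNormalForm.of_pivot (hR : Function.Surjective (Int.castRingHom R))
    (IH : ∀ (κ : Type u) [Fintype κ] [DecidableEq κ], Fintype.card κ < Fintype.card ι →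
      ∀ Y : Matrix κ κ R, HasNormalForm (Y + Yᵀ))
    (X : Matrix ι ι R) {d : ℕ} (v : Fin (d + 1) ↪ ι)
    {K : Matrix (Fin (d + 1)) (Fin (d + 1)) R}
    (hK : ∀ C : Matrix {x // x ∉ Set.range v} {x // x ∉ Set.range v} R,
      HasNormalForm C → HasNormalForm (fromBlocks K 0 0 C))
    (hvK : IntCong ((X + Xᵀ).submatrix v v) K) (c : R) (U : Matrix (Fin (d + 1)) (Fin (d + 1)) R)
    (hU : IsUnit U.det) (hvU : (X + Xᵀ).submatrix v v = c • U)
    (W : Matrix (Fin (d + 1)) {x // x ∉ Set.range v} R) (hW : (X + Xᵀ).submatrix v (↑) = c • W) :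
    HasNormalForm (X + Xᵀ) := by
  set A := X + Xᵀ
  have hA : A.IsSymm := by simp [A, IsSymm, add_comm]
  let e : Fin (d + 1) ⊕ {x // x ∉ Set.range v} ≃ ι :=
    ((Equiv.ofInjective v v.injective).sumCongr (Equiv.refl _)).trans
      (Equiv.sumCompl (· ∈ Set.range v))
  have hblocks : A.submatrix e e = fromBlocks (A.submatrix v v) (A.submatrix v (↑))
      (A.submatrix v (↑))ᵀ (A.submatrix (↑) (↑)) := by
    ext (a | x) (b | y) <;> simp [e, hA.apply]
  choose Z hZ using fun a x => hR (-(U⁻¹ * W) a x)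
  have hBZ : A.submatrix v v * (Matrix.of Z).map (Int.castRingHom R) = -A.submatrix v (↑) := by
    have : (Matrix.of Z).map (Int.castRingHom R) = -(U⁻¹ * W) := by ext a x; exact hZ a x
    rw [this, hvU, hW, Matrix.mul_neg, Matrix.smul_mul, ← Matrix.mul_assoc,
      mul_nonsing_inv _ hU, Matrix.one_mul]
  have hAC := (IntCong.of_eq_submatrix (A := A) e.symm (by rw [hblocks.symm]; simp)).trans
    (intCong_fromBlocks_of_mul_eq_neg (hA.submatrix v) _ _ _ hBZ)
  obtain ⟨Y, hY⟩ := hAC.exists_add_transpose ⟨X, rfl⟩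
  refine HasNormalForm.of_intCong (hAC.trans (hvK.fromBlocks_zero (.refl _))) (hK _ ?_)
  have hC := congrArg toBlocks₂₂ hY
  rw [toBlocks_fromBlocks₂₂] at hC
  rw [hC]
  exact IH _ (Fintype.card_subtype_lt (x := v 0) (by simp)) _

end Pivot

section ZModFour

variable {ι : Type u} [Fintype ι] [DecidableEq ι]

theorem intCong_A₂_or_hyperbolic {α β γ : ZMod 4} (hα : Even α) (hγ : Even γ) (hβ : ¬Even β) :
    IntCong !![α, β; β, γ] !![(2 : ZMod 4), 1; 1, 2] ∨
      IntCong !![α, β; β, γ] !![(0 : ZMod 4), 1; 1, 0] := by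
  have hcases : ∀ α β γ : ZMod 4, Even α → Even γ → ¬Even β →
      (α = 0 ∨ α = 2) ∧ (γ = 0 ∨ γ = 2) ∧ (β = 1 ∨ β = 3) := by
    unfold Even; decide
  obtain ⟨rfl | rfl, rfl | rfl, rfl | rfl⟩ := hcases α β γ hα hγ hβ
  · exact .inr (.of_conj 1 (by simp) (by decide))
  · exact .inr (.of_conj !![1, 0; 0, -1] (by simp [det_fin_two_of]) (by decide))
  · exact .inr (.of_conj !![1, 1; 0, 1] (by simp [det_fin_two_of]) (by decide))
  · exact .inr (.of_conj !![1, 1; 0, -1] (by simp [det_fin_two_of]) (by decide))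
  · exact .inr (.of_conj !![0, 1; 1, 1] (by simp [det_fin_two_of]) (by decide))
  · exact .inr (.of_conj !![0, 1; -1, -1] (by simp [det_fin_two_of]) (by decide))
  · exact .inl (.of_conj 1 (by simp) (by decide))
  · exact .inl (.of_conj !![1, 0; 0, -1] (by simp [det_fin_two_of]) (by decide))

theorem hasNormalForm_of_not_even (X : Matrix ι ι (ZMod 4)) {i j : ι}
    (hij : ¬Even ((X + Xᵀ) i j))
    (IH : ∀ (κ : Type u) [Fintype κ] [DecidableEq κ], Fintype.card κ < Fintype.card ι →
      ∀ Y : Matrix κ κ (ZMod 4), HasNormalForm (Y + Yᵀ)) :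
    HasNormalForm (X + Xᵀ) := by
  have hne : i ≠ j := by
    rintro rfl
    exact hij ⟨X i i, rfl⟩
  set v := Function.Embedding.embFinTwo hne
  set β := (X + Xᵀ) i j
  have hv : (X + Xᵀ).submatrix v v = !![X i i + X i i, β; β, X j j + X j j] := by
    ext a b
    fin_cases a <;> fin_cases b <;>
      simp [v, β, Function.Embedding.embFinTwo_apply_zero, Function.Embedding.embFinTwo_apply_one,
        add_comm]
  have hdet : IsUnit (!![X i i + X i i, β; β, X j j + X j j]).det := by
    have hodd : ∀ x y β : ZMod 4, ¬Even β → (x + x) * (y + y) - β * β = -1 := by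
      unfold Even; decide
    rw [det_fin_two_of, hodd _ _ _ hij]
    exact isUnit_one.neg
  rcases intCong_A₂_or_hyperbolic ⟨X i i, rfl⟩ ⟨X j j, rfl⟩ hij with h | h
  · exact .of_pivot (ZMod.ringHom_surjective _) IH X v
      (fun C hC => hC.fromBlocks_A₂) (hv ▸ h) 1 _ hdet (by rw [hv, one_smul]) _ (one_smul _ _).symm
  · exact .of_pivot (ZMod.ringHom_surjective _) IH X v
      (fun C hC => hC.fromBlocks_hyperbolic) (hv ▸ h) 1 _ hdet (by rw [hv, one_smul]) _
      (one_smul _ _).symm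

theorem hasNormalForm_of_diag_ne_zero (X H : Matrix ι ι (ZMod 4))
    (hH : X + Xᵀ = (2 : ZMod 4) • H) {i : ι} (hi : (X + Xᵀ) i i ≠ 0)
    (IH : ∀ (κ : Type u) [Fintype κ] [DecidableEq κ], Fintype.card κ < Fintype.card ι →
      ∀ Y : Matrix κ κ (ZMod 4), HasNormalForm (Y + Yᵀ)) :
    HasNormalForm (X + Xᵀ) := by
  have hdouble : ∀ x : ZMod 4, x + x ≠ 0 → x + x = 2 := by decide
  let v : Fin 1 ↪ ι := ⟨fun _ => i, Function.injective_of_subsingleton _⟩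
  have hv : (X + Xᵀ).submatrix v v = !![2] := by
    ext a b
    simpa [v, Subsingleton.elim a 0, Subsingleton.elim b 0] using hdouble _ hi
  refine .of_pivot (ZMod.ringHom_surjective _) IH X v (fun C hC => hC.fromBlocks_two)
    (hv ▸ .refl _) 2 1 (by simp) ?_ (H.submatrix v (↑)) (by rw [hH]; rfl)
  rw [hv]
  ext a b
  simp [Subsingleton.elim a b]

theorem hasNormalForm_of_diag_eq_zero_of_ne_zero (X H : Matrix ι ι (ZMod 4)) (hH : X + Xᵀ = (2 : ZMod 4) • H)
    (hdiag : ∀ i, (X + Xᵀ) i i = 0) {i j : ι} (hij : (X + Xᵀ) i j ≠ 0)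
    (IH : ∀ (κ : Type u) [Fintype κ] [DecidableEq κ], Fintype.card κ < Fintype.card ι →
      ∀ Y : Matrix κ κ (ZMod 4), HasNormalForm (Y + Yᵀ)) :
    HasNormalForm (X + Xᵀ) := by
  have hne : i ≠ j := by
    rintro rfl
    exact hij (hdiag i)
  have hdouble : ∀ x : ZMod 4, (2 : ZMod 4) • x ≠ 0 → (2 : ZMod 4) • x = 2 := by decide
  have h2 : X i j + X j i = 2 := by
    rw [hH] at hij
    exact (congrFun₂ hH i j).trans (hdouble _ hij)
  set v := Function.Embedding.embFinTwo hne
  have hv : (X + Xᵀ).submatrix v v = !![0, 2; 2, 0] := by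
    ext a b
    fin_cases a <;> fin_cases b <;>
      simp [v, Function.Embedding.embFinTwo_apply_zero, Function.Embedding.embFinTwo_apply_one,
        hdiag, h2, add_comm (X j i)]
  refine .of_pivot (ZMod.ringHom_surjective _) IH X v (fun C hC => hC.fromBlocks_two_hyperbolic)
    (hv ▸ .refl _) 2 !![0, 1; 1, 0] (by simp [det_fin_two_of]) ?_ (H.submatrix v (↑))
    (by rw [hH]; rfl)
  rw [hv]
  ext a b
  fin_cases a <;> fin_cases b <;> rfl

theorem hasNormalForm_add_transpose (X : Matrix ι ι (ZMod 4)) : HasNormalForm (X + Xᵀ) := by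
  induction hn : Fintype.card ι using Nat.strong_induction_on generalizing ι with
  | _ n IH' =>
  have IH : ∀ (κ : Type u) [Fintype κ] [DecidableEq κ], Fintype.card κ < Fintype.card ι →
      ∀ Y : Matrix κ κ (ZMod 4), HasNormalForm (Y + Yᵀ) :=
    fun κ _ _ hκ Y => IH' _ (hn ▸ hκ) Y rfl
  by_cases hodd : ∃ i j, ¬Even ((X + Xᵀ) i j)
  · obtain ⟨i, j, hij⟩ := hodd
    exact hasNormalForm_of_not_even X hij IH
  push Not at hodd
  choose H hH using hodd
  have h2H : X + Xᵀ = (2 : ZMod 4) • Matrix.of H := by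
    ext i j
    rw [hH i j, two_smul]
    rfl
  by_cases hdiag : ∃ i, (X + Xᵀ) i i ≠ 0
  · obtain ⟨i, hi⟩ := hdiag
    exact hasNormalForm_of_diag_ne_zero X _ h2H hi IH
  push Not at hdiag
  by_cases hoff : ∃ i j, (X + Xᵀ) i j ≠ 0
  · obtain ⟨i, j, hij⟩ := hoff
    exact hasNormalForm_of_diag_eq_zero_of_ne_zero X _ h2H hdiag hij IH
  push Not at hoff
  rw [Matrix.ext hoff]
  exact hasNormalForm_zero

end ZModFour

section Bridge

variable {R : Type*} [CommRing R]

/-- `finProdFinEquiv` sends `(a, u)` to `2 * a + u`, the position `nfEntry` gives to row `u` of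
the `a`-th copy of a `2 × 2` block. -/
def normalFormIndexEquiv (r s t p m : ℕ) :
    NormalFormIndex r s t p m ≃ Fin (r * 2 + (s * 2 + (t * 2 + (p * 1 + m)))) :=
  (finProdFinEquiv.sumCongr <| finProdFinEquiv.sumCongr <| finProdFinEquiv.sumCongr <|
    finProdFinEquiv.sumCongr (Equiv.refl _)).trans <|
  (Equiv.sumCongr (Equiv.refl _) <| Equiv.sumCongr (Equiv.refl _) <|
    Equiv.sumCongr (Equiv.refl _) finSumFinEquiv).trans <|
  (Equiv.sumCongr (Equiv.refl _) <| Equiv.sumCongr (Equiv.refl _) finSumFinEquiv).trans <|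
  (Equiv.sumCongr (Equiv.refl _) finSumFinEquiv).trans finSumFinEquiv

theorem nfEntry_normalFormIndexEquiv (r s t p m : ℕ) (x y : NormalFormIndex r s t p m) :
    (nfEntry r s t p (normalFormIndexEquiv r s t p m x) (normalFormIndexEquiv r s t p m y) : R) =
      normalForm R r s t p m x y := by
  have hA₂ (u w : Fin 2) : !![(2 : R), 1; 1, 2] u w = if u = w then 2 else 1 := by
    fin_cases u <;> fin_cases w <;> rfl
  have hH (u w : Fin 2) : !![(0 : R), 1; 1, 0] u w = if u = w then 0 else 1 := by
    fin_cases u <;> fin_cases w <;> rfl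
  have h2H (u w : Fin 2) : !![(0 : R), 2; 2, 0] u w = if u = w then 0 else 2 := by
    fin_cases u <;> fin_cases w <;> rfl
  have h2 (u w : Fin 1) : !![(2 : R)] u w = 2 := by
    fin_cases u; fin_cases w; rfl
  rcases x with ⟨a, u⟩ | ⟨a, u⟩ | ⟨a, u⟩ | ⟨a, u⟩ | a <;>
  rcases y with ⟨b, w⟩ | ⟨b, w⟩ | ⟨b, w⟩ | ⟨b, w⟩ | b <;>
  have := a.isLt <;> have := b.isLt <;> (try have := u.isLt) <;> (try have := w.isLt) <;>
  simp only [normalFormIndexEquiv, normalForm, Equiv.trans_apply, Equiv.sumCongr_apply,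
    Equiv.coe_refl, Sum.map_inl, Sum.map_inr, id_eq, finProdFinEquiv_apply_val,
    finSumFinEquiv_apply_left, finSumFinEquiv_apply_right, Fin.val_castAdd, Fin.val_natAdd,
    Fin.val_eq_zero, fromBlocks_apply₁₁, fromBlocks_apply₁₂, fromBlocks_apply₂₁,
    fromBlocks_apply₂₂, Matrix.zero_apply, kroneckerMap_apply, one_apply, hA₂, hH, h2H, h2,
    Fin.ext_iff, ite_mul, mul_ite, one_mul, mul_one, zero_mul, mul_zero, zero_add] <;>
  unfold nfEntry <;>
  simp (disch := omega) only [if_pos, if_neg, Int.cast_ite, Int.cast_zero, Int.cast_one,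
    Int.cast_ofNat] <;>
  split_ifs <;> first | rfl | omega

theorem intCong_normalForm_nfEntry {n r s t p m : ℕ} (hn : n = 2 * r + 2 * s + 2 * t + p + m) :
    IntCong (normalForm R r s t p m) (Matrix.of fun i j : Fin n => (nfEntry r s t p i j : R)) :=
  .of_eq_submatrix ((normalFormIndexEquiv r s t p m).trans (finCongr (by omega))) <| by
    ext x y
    simp [nfEntry_normalFormIndexEquiv]

end Bridge

theorem Matrix.IsSymm.exists_eq_add_transpose {R ι : Type*} [AddCommMonoid R] [LinearOrder ι]
    {A : Matrix ι ι R} (hA : A.IsSymm) (hdiag : ∀ i, Even (A i i)) : ∃ X, A = X + Xᵀ := by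
  choose c hc using hdiag
  refine ⟨of fun i j => if i < j then A i j else if i = j then c i else 0, ?_⟩
  ext i j
  rcases lt_trichotomy i j with h | rfl | h
  · simp [h, h.not_gt, h.ne']
  · simp [hc]
  · simp [h, h.not_gt, h.ne', hA.apply i j]

open Matrix in
/-- Every symmetric integer matrix with even diagonal is congruent over ℤ,
modulo 4, to a normal form as in Theorem 1.1. -/
theorem stmt_0 (n : ℕ) (A : Matrix (Fin n) (Fin n) ℤ)
    (hsym : A.IsSymm) (hdiag : ∀ i, Even (A i i)) :
    ∃ P : Matrix (Fin n) (Fin n) ℤ, (P.det = 1 ∨ P.det = -1) ∧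
      ∃ r s t p m : ℕ, n = 2*r + 2*s + 2*t + p + m ∧
        ∀ i j : Fin n,
          (((Pᵀ * A * P) i j : ℤ) : ZMod 4) = ((nfEntry r s t p (i : ℕ) (j : ℕ) : ℤ) : ZMod 4) := by
  set φ := Int.castRingHom (ZMod 4)
  obtain ⟨X, hX⟩ := hsym.exists_eq_add_transpose hdiag
  obtain ⟨r, s, t, p, m, hnf⟩ := hasNormalForm_add_transpose (X.map φ)
  rw [← transpose_map, ← Matrix.map_add _ (map_add φ), ← hX] at hnf
  have hn : n = 2 * r + 2 * s + 2 * t + p + m := by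
    have := hnf.card_eq
    simp only [Fintype.card_fin, Fintype.card_sum, Fintype.card_prod, Fintype.card_unique,
      mul_one] at this
    omega
  obtain ⟨P, hP, hPA⟩ := (hnf.trans (intCong_normalForm_nfEntry hn)).exists_conj_eq
  refine ⟨P, Int.isUnit_iff.mp hP, r, s, t, p, m, hn, fun i j => ?_⟩
  rw [← transpose_map, ← Matrix.map_mul, ← Matrix.map_mul] at hPA
  exact congrFun₂ hPA i j
end

section
/- Let A be a symmetric n×n integer matrix with even diagonal entries. Then there is an integer matrix P with det(P) = ±1 such that P^T A P modulo 4 is of the form diag(r·[[2,1],[1,2]], s·[[0,1],[1,0]], p·[2], Z), where Z is a symmetric matrix whose diagonal entries are all ≡ 0 mod 4 and whose every off-diagonal entry is ≡ 0 or 2 mod 4. -/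
open Matrix

section Congruence

variable {R : Type*} [CommRing R] {m n a b : Type*} [Fintype m] [DecidableEq m]

def IntCongr (B B' : Matrix m m R) : Prop :=
  ∃ P : Matrix m m ℤ, IsUnit P.det ∧
    B' = (P.map (Int.castRingHom R))ᵀ * B * P.map (Int.castRingHom R)

namespace IntCongr

theorem refl (B : Matrix m m R) : IntCongr B B :=
  ⟨1, by simp, by simp⟩

theorem trans {B C D : Matrix m m R} (h₁ : IntCongr B C) (h₂ : IntCongr C D) :
    IntCongr B D := by
  obtain ⟨P, hP, rfl⟩ := h₁
  obtain ⟨Q, hQ, rfl⟩ := h₂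
  exact ⟨P * Q, by simpa only [det_mul] using hP.mul hQ,
    by simp only [Matrix.map_mul, transpose_mul, Matrix.mul_assoc]⟩

theorem submatrix_equiv (B : Matrix m m R) (σ : Equiv.Perm m) :
    IntCongr B (B.submatrix σ σ) := by
  refine ⟨Equiv.Perm.permMatrix ℤ σ.symm, ?_, ?_⟩
  · rw [det_permutation]
    exact (Equiv.Perm.sign σ.symm).isUnit.map (Int.castRingHom ℤ)
  · unfold Equiv.Perm.permMatrix
    rw [PEquiv.map_toMatrix, ← PEquiv.toMatrix_symm,
      ← Equiv.toPEquiv_symm, Equiv.symm_symm, PEquiv.toMatrix_toPEquiv_mul,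
      PEquiv.mul_toMatrix_toPEquiv, Equiv.symm_symm]
    rfl

theorem reindex [Fintype n] [DecidableEq n] (e : m ≃ n) {B C : Matrix m m R}
    (h : IntCongr B C) : IntCongr (Matrix.reindex e e B) (Matrix.reindex e e C) := by
  obtain ⟨P, hP, rfl⟩ := h
  refine ⟨Matrix.reindex e e P, by rwa [det_reindex_self], ?_⟩
  simp only [reindex_apply, ← submatrix_map, transpose_submatrix, submatrix_mul_equiv,
    Matrix.mul_assoc]

theorem isSymm {B C : Matrix m m R} (h : IntCongr B C) (hB : B.IsSymm) : C.IsSymm := by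
  obtain ⟨P, -, rfl⟩ := h
  simp only [IsSymm, transpose_mul, transpose_transpose, hB.eq, Matrix.mul_assoc]

theorem smul_eq_zero {B C : Matrix m m R} (h : IntCongr B C) {c : R} (hB : c • B = 0) :
    c • C = 0 := by
  obtain ⟨P, -, rfl⟩ := h
  rw [Matrix.mul_assoc, ← Matrix.mul_smul, ← Matrix.smul_mul, hB, Matrix.zero_mul,
    Matrix.mul_zero]

variable [Fintype a] [DecidableEq a] [Fintype b] [DecidableEq b]

theorem fromBlocks_diagonal (M : Matrix a a R) (E : Matrix a b R) (F : Matrix b a R)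
    (C : Matrix b b R) {U : Matrix a a ℤ} {V : Matrix b b ℤ} (hU : IsUnit U.det)
    (hV : IsUnit V.det) :
    IntCongr (fromBlocks M E F C)
      (fromBlocks ((U.map (Int.castRingHom R))ᵀ * M * U.map (Int.castRingHom R))
        ((U.map (Int.castRingHom R))ᵀ * E * V.map (Int.castRingHom R))
        ((V.map (Int.castRingHom R))ᵀ * F * U.map (Int.castRingHom R))
        ((V.map (Int.castRingHom R))ᵀ * C * V.map (Int.castRingHom R))) := by
  refine ⟨fromBlocks U 0 0 V, by simpa [det_fromBlocks_zero₂₁] using hU.mul hV, ?_⟩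
  simp [fromBlocks_map, fromBlocks_transpose, fromBlocks_multiply, Matrix.mul_assoc]

theorem fromBlocks_zero_zero (M : Matrix a a R) {C D : Matrix b b R} (h : IntCongr C D) :
    IntCongr (fromBlocks M 0 0 C) (fromBlocks M 0 0 D) := by
  obtain ⟨V, hV, rfl⟩ := h
  simpa using fromBlocks_diagonal M 0 0 C (U := 1) (by simp) hV

theorem fromBlocks_clear (hsurj : Function.Surjective (Int.castRingHom R))
    {M : Matrix a a R} (hM : M.IsSymm) (C : Matrix b b R) (X : Matrix a b R) :
    IntCongr (fromBlocks M (M * X) (M * X)ᵀ C) (fromBlocks M 0 0 (C - Xᵀ * M * X)) := by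
  obtain ⟨X₀, rfl⟩ : ∃ X₀ : Matrix a b ℤ, X₀.map (Int.castRingHom R) = X :=
    ⟨X.map (Function.surjInv hsurj), by ext i j; exact Function.surjInv_eq hsurj (X i j)⟩
  refine ⟨fromBlocks 1 (-X₀) 0 1, by simp, ?_⟩
  have hneg : (-X₀).map (Int.castRingHom R) = -X₀.map (Int.castRingHom R) :=
    Matrix.map_neg _ (map_neg _) X₀
  simp only [fromBlocks_map, hneg, fromBlocks_transpose, fromBlocks_multiply]
  simp [hM.eq, Matrix.mul_assoc, sub_eq_neg_add]

end IntCongr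

end Congruence

section FinBlockDiag

variable {R : Type*} {k m n : ℕ}

def finBlockDiag [Zero R] (M : Matrix (Fin k) (Fin k) R) (D : Matrix (Fin n) (Fin n) R) :
    Matrix (Fin (k + n)) (Fin (k + n)) R :=
  reindex finSumFinEquiv finSumFinEquiv (fromBlocks M 0 0 D)

section Entries

variable [Zero R] (M : Matrix (Fin k) (Fin k) R) (D : Matrix (Fin n) (Fin n) R)

@[simp]
theorem finBlockDiag_castAdd_castAdd (a b : Fin k) :
    finBlockDiag M D (Fin.castAdd n a) (Fin.castAdd n b) = M a b := by
  simp [finBlockDiag]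

@[simp]
theorem finBlockDiag_castAdd_natAdd (a : Fin k) (j : Fin n) :
    finBlockDiag M D (Fin.castAdd n a) (Fin.natAdd k j) = 0 := by
  simp [finBlockDiag]

@[simp]
theorem finBlockDiag_natAdd_castAdd (i : Fin n) (b : Fin k) :
    finBlockDiag M D (Fin.natAdd k i) (Fin.castAdd n b) = 0 := by
  simp [finBlockDiag]

@[simp]
theorem finBlockDiag_natAdd_natAdd (i j : Fin n) :
    finBlockDiag M D (Fin.natAdd k i) (Fin.natAdd k j) = D i j := by
  simp [finBlockDiag]

theorem finBlockDiag_submatrix_natAdd :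
    (finBlockDiag M D).submatrix (Fin.natAdd k) (Fin.natAdd k) = D := by
  ext; simp

end Entries

theorem reindex_finSumFinEquiv_symm (B : Matrix (Fin (k + m)) (Fin (k + m)) R) :
    reindex finSumFinEquiv.symm finSumFinEquiv.symm B =
      fromBlocks (B.submatrix (Fin.castAdd m) (Fin.castAdd m))
        (B.submatrix (Fin.castAdd m) (Fin.natAdd k))
        (B.submatrix (Fin.natAdd k) (Fin.castAdd m))
        (B.submatrix (Fin.natAdd k) (Fin.natAdd k)) := by
  ext (i | i) (j | j) <;> simp

variable [CommRing R]

theorem IntCongr.finBlockDiag_right (M : Matrix (Fin k) (Fin k) R)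
    {C D : Matrix (Fin n) (Fin n) R} (h : IntCongr C D) :
    IntCongr (finBlockDiag M C) (finBlockDiag M D) :=
  (h.fromBlocks_zero_zero M).reindex finSumFinEquiv

theorem IntCongr.finBlockDiag_of_corner (hsurj : Function.Surjective (Int.castRingHom R))
    {B : Matrix (Fin (k + m)) (Fin (k + m)) R} (hB : B.IsSymm) {U : Matrix (Fin k) (Fin k) ℤ}
    (hU : IsUnit U.det) {M : Matrix (Fin k) (Fin k) R} (hM : M.IsSymm)
    (hUM : (U.map (Int.castRingHom R))ᵀ * B.submatrix (Fin.castAdd m) (Fin.castAdd m) *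
      U.map (Int.castRingHom R) = M)
    (X : Matrix (Fin k) (Fin m) R)
    (hX : (U.map (Int.castRingHom R))ᵀ * B.submatrix (Fin.castAdd m) (Fin.natAdd k) = M * X) :
    IntCongr B
      (finBlockDiag M (B.submatrix (Fin.natAdd k) (Fin.natAdd k) - Xᵀ * M * X)) := by
  set E := B.submatrix (Fin.castAdd m) (Fin.natAdd k)
  set C := B.submatrix (Fin.natAdd k) (Fin.natAdd k)
  have hblocks : Matrix.reindex finSumFinEquiv finSumFinEquiv
      (fromBlocks (B.submatrix (Fin.castAdd m) (Fin.castAdd m)) E Eᵀ C) = B := by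
    rw [show Eᵀ = B.submatrix (Fin.natAdd k) (Fin.castAdd m) by ext i j; exact hB.apply _ _,
      ← reindex_finSumFinEquiv_symm]
    simp
  have hcorner : IntCongr (fromBlocks (B.submatrix (Fin.castAdd m) (Fin.castAdd m)) E Eᵀ C)
      (fromBlocks M (M * X) (M * X)ᵀ C) := by
    have h := IntCongr.fromBlocks_diagonal (B.submatrix (Fin.castAdd m) (Fin.castAdd m)) E Eᵀ C
      hU (V := 1) (by simp)
    simp only [Matrix.map_one _ (map_zero _) (map_one _), transpose_one, Matrix.mul_one,
      Matrix.one_mul] at h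
    rwa [← hX, ← hUM, transpose_mul, transpose_transpose]
  rw [← hblocks]
  exact (hcorner.trans (IntCongr.fromBlocks_clear hsurj hM C X)).reindex finSumFinEquiv

end FinBlockDiag

section EvenForms

variable {m n : Type*}

def IsEvenSymm (B : Matrix m m (ZMod 4)) : Prop :=
  B.IsSymm ∧ ∀ i, 2 * B i i = 0

theorem IsEvenSymm.submatrix {B : Matrix m m (ZMod 4)} (hB : IsEvenSymm B) (f : n → m) :
    IsEvenSymm (B.submatrix f f) :=
  ⟨hB.1.submatrix f, fun i => hB.2 (f i)⟩

theorem IsEvenSymm.two_mul_dotProduct_mulVec [Fintype m] {B : Matrix m m (ZMod 4)}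
    (hB : IsEvenSymm B) (v : m → ZMod 4) : 2 * (v ⬝ᵥ B *ᵥ v) = 0 := by
  classical
  have hsum : 2 * (v ⬝ᵥ B *ᵥ v) =
      ∑ x ∈ Finset.univ ×ˢ Finset.univ, 2 * (v x.1 * B x.1 x.2 * v x.2) := by
    rw [Finset.sum_product]
    simp [dotProduct, mulVec, Finset.mul_sum, mul_assoc]
  have hdiag : ∑ x ∈ (Finset.univ : Finset m).diag, 2 * (v x.1 * B x.1 x.2 * v x.2) = 0 :=
    Finset.sum_eq_zero fun x hx => by
      rw [← (Finset.mem_diag.1 hx).2, show 2 * (v x.1 * B x.1 x.1 * v x.1) =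
        2 * B x.1 x.1 * (v x.1 * v x.1) by ring, hB.2, zero_mul]
  -- the terms at `(i, j)` and `(j, i)` are equal, so they cancel in pairs modulo 4
  have hoffDiag : ∑ x ∈ (Finset.univ : Finset m).offDiag,
      2 * (v x.1 * B x.1 x.2 * v x.2) = 0 := by
    refine Finset.sum_involution (fun x _ => x.swap) (fun x _ => ?_)
      (fun x hx _ h => (Finset.mem_offDiag.1 hx).2.2 (congrArg Prod.fst h).symm)
      (fun x hx => by simpa [and_comm, eq_comm] using hx) (fun x _ => x.swap_swap)
    have h4 : (4 : ZMod 4) = 0 := rfl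
    rw [Prod.fst_swap, Prod.snd_swap, hB.1.apply x.1 x.2]
    linear_combination (v x.1 * B x.1 x.2 * v x.2) * h4
  rw [hsum, ← Finset.diag_union_offDiag, Finset.sum_union (Finset.disjoint_diag_offDiag _),
    hdiag, hoffDiag, add_zero]

theorem IntCongr.isEvenSymm [Fintype m] [DecidableEq m] {B C : Matrix m m (ZMod 4)}
    (h : IntCongr B C) (hB : IsEvenSymm B) : IsEvenSymm C := by
  refine ⟨h.isSymm hB.1, fun i => ?_⟩
  obtain ⟨P, -, rfl⟩ := h
  rw [mul_mul_apply]
  exact hB.two_mul_dotProduct_mulVec _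

end EvenForms

def anisoBlock : Matrix (Fin 2) (Fin 2) (ZMod 4) := !![2, 1; 1, 2]

def hypBlock : Matrix (Fin 2) (Fin 2) (ZMod 4) := !![0, 1; 1, 0]

def twoBlock : Matrix (Fin 1) (Fin 1) (ZMod 4) := !![2]

theorem intCongr_anisoBlock_or_hypBlock {M : Matrix (Fin 2) (Fin 2) (ZMod 4)}
    (hM : IsEvenSymm M) (h01 : 2 * M 0 1 ≠ 0) :
    IntCongr M anisoBlock ∨ IntCongr M hypBlock := by
  have heven : ∀ x : ZMod 4, 2 * x = 0 → x = 0 ∨ x = 2 := by decide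
  have hodd : ∀ x : ZMod 4, 2 * x ≠ 0 → x = 1 ∨ x = 3 := by decide
  rw [eta_fin_two M, hM.1.apply 0 1]
  rcases heven _ (hM.2 0) with h00 | h00 <;> rcases hodd _ h01 with h01 | h01 <;>
    rcases heven _ (hM.2 1) with h11 | h11 <;> rw [h00, h01, h11]
  · exact .inr ⟨1, by simp, by decide⟩
  · exact .inr ⟨!![1, -1; 0, 1], by simp [det_fin_two_of], by decide⟩
  · exact .inr ⟨!![1, 0; 0, -1], by simp [det_fin_two_of], by decide⟩
  · exact .inr ⟨!![1, 1; 0, -1], by simp [det_fin_two_of], by decide⟩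
  · exact .inr ⟨!![1, 0; -1, 1], by simp [det_fin_two_of], by decide⟩
  · exact .inl ⟨1, by simp, by decide⟩
  · exact .inr ⟨!![1, 0; 1, -1], by simp [det_fin_two_of], by decide⟩
  · exact .inl ⟨!![1, 0; 0, -1], by simp [det_fin_two_of], by decide⟩

section NormalForm

variable {n : ℕ}

/-- The leading `K × K` block of `C` follows the pattern `N`; the rest of `C` is the block `Z`
of the normal form. -/
def IsNormalForm (N : ℕ → ℕ → ℤ) (K : ℕ) (C : Matrix (Fin n) (Fin n) (ZMod 4)) : Prop :=
  K ≤ n ∧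
    (∀ i j : Fin n, (i : ℕ) < K → (j : ℕ) < K → C i j = N i j) ∧
    (∀ i j : Fin n, (i : ℕ) < K → K ≤ (j : ℕ) → C i j = 0 ∧ C j i = 0) ∧
    (∀ i : Fin n, K ≤ (i : ℕ) → C i i = 0) ∧
    (∀ i j : Fin n, K ≤ (i : ℕ) → K ≤ (j : ℕ) → i ≠ j → C i j = 0 ∨ C i j = 2)

theorem IsNormalForm.finBlockDiag_cons {N N' : ℕ → ℕ → ℤ} {K k : ℕ}
    {M : Matrix (Fin k) (Fin k) (ZMod 4)} {D : Matrix (Fin n) (Fin n) (ZMod 4)}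
    (hD : IsNormalForm N K D) (hM : ∀ a b : Fin k, M a b = N' a b)
    (hN' : ∀ i j, N' (k + i) (k + j) = N i j)
    (hN'₀ : ∀ (a : Fin k) j, N' a (k + j) = 0 ∧ N' (k + j) a = 0) :
    IsNormalForm N' (k + K) (finBlockDiag M D) := by
  obtain ⟨hK, h₁, h₂, h₃, h₄⟩ := hD
  refine ⟨by omega, fun i j hi hj => ?_, fun i j hi hj => ?_, fun i hi => ?_,
    fun i j hi hj hij => ?_⟩
  · induction i using Fin.addCases <;> induction j using Fin.addCases
    · simp [hM]
    · simp [(hN'₀ _ _).1]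
    · simp [(hN'₀ _ _).2]
    · simp only [Fin.val_natAdd] at hi hj ⊢
      rw [finBlockDiag_natAdd_natAdd, hN']
      exact h₁ _ _ (by omega) (by omega)
  · induction j using Fin.addCases with
    | left b => simp at hj; omega
    | right j =>
      induction i using Fin.addCases with
      | left a => simp
      | right i =>
        simp only [Fin.val_natAdd] at hi hj
        simpa using h₂ i j (by omega) (by omega)
  · induction i using Fin.addCases with
    | left a => simp at hi; omega
    | right i =>
      simp only [Fin.val_natAdd] at hi
      simpa using h₃ i (by omega)
  · induction i using Fin.addCases with
    | left a => simp at hi; omega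
    | right i =>
      induction j using Fin.addCases with
      | left b => simp at hj; omega
      | right j =>
        simp only [Fin.val_natAdd] at hi hj
        simpa using h₄ i j (by omega) (by omega) (fun h => hij (by rw [h]))

theorem IsNormalForm.submatrix {N N' : ℕ → ℕ → ℤ} {K : ℕ}
    {C : Matrix (Fin n) (Fin n) (ZMod 4)} (hC : IsNormalForm N K C) (σ : Equiv.Perm (Fin n))
    (hσ : ∀ i : Fin n, K ≤ (i : ℕ) → σ i = i)
    (hN : ∀ i j : Fin n, N (σ i) (σ j) = N' i j) :
    IsNormalForm N' K (C.submatrix σ σ) := by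
  obtain ⟨hK, h₁, h₂, h₃, h₄⟩ := hC
  have hlt : ∀ i : Fin n, (i : ℕ) < K → (σ i : ℕ) < K := fun i hi => by
    by_contra h
    have := σ.injective (hσ (σ i) (not_lt.1 h))
    rw [this] at h
    exact h hi
  refine ⟨hK, fun i j hi hj => ?_, fun i j hi hj => ?_, fun i hi => ?_,
    fun i j hi hj hij => ?_⟩
  · rw [submatrix_apply, h₁ _ _ (hlt i hi) (hlt j hj), hN]
  · simpa only [submatrix_apply, hσ j hj] using h₂ (σ i) j (hlt i hi) hj
  · simpa only [submatrix_apply, hσ i hi] using h₃ i hi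
  · simpa only [submatrix_apply, hσ i hi, hσ j hj] using h₄ i j hi hj hij

end NormalForm

section NfEntry

variable {r s p i j : ℕ}

theorem anisoBlock_eq_nfEntry (a b : Fin 2) : anisoBlock a b = nfEntry (r + 1) s 0 p a b := by
  rw [show nfEntry (r + 1) s 0 p a b = if (a : ℕ) = b then 2 else 1 by
    unfold nfEntry; split_ifs <;> omega]
  fin_cases a <;> fin_cases b <;> rfl

theorem nfEntry_succ_two_add : nfEntry (r + 1) s 0 p (2 + i) (2 + j) = nfEntry r s 0 p i j := by
  unfold nfEntry; split_ifs <;> omega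

theorem nfEntry_succ_two_add_right (hi : i < 2) : nfEntry (r + 1) s 0 p i (2 + j) = 0 := by
  unfold nfEntry; split_ifs <;> omega

theorem nfEntry_succ_two_add_left (hi : i < 2) : nfEntry (r + 1) s 0 p (2 + j) i = 0 := by
  unfold nfEntry; split_ifs <;> omega

theorem twoBlock_eq_nfEntry (a b : Fin 1) : twoBlock a b = nfEntry 0 0 0 (p + 1) a b := by
  fin_cases a; fin_cases b; simp [twoBlock, nfEntry]

theorem nfEntry_zero_succ_one_add :
    nfEntry 0 0 0 (p + 1) (1 + i) (1 + j) = nfEntry 0 0 0 p i j := by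
  unfold nfEntry; split_ifs <;> omega

theorem nfEntry_zero_succ_one_add_right : nfEntry 0 0 0 (p + 1) 0 (1 + j) = 0 := by
  unfold nfEntry; split_ifs <;> omega

theorem nfEntry_zero_succ_one_add_left : nfEntry 0 0 0 (p + 1) (1 + j) 0 = 0 := by
  unfold nfEntry; split_ifs <;> omega

/-- Rotation of `{0, …, 2r + 1}` by two places: it sends each index of
`diag(r • anisoBlock, hypBlock)` to the index of the same entry of
`diag(hypBlock, r • anisoBlock)`. -/
def rotTwo (r i : ℕ) : ℕ :=
  if i < 2 * r then i + 2 else if i < 2 * r + 2 then i - 2 * r else i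

def rotTwoInv (r i : ℕ) : ℕ :=
  if i < 2 then i + 2 * r else if i < 2 * r + 2 then i - 2 else i

theorem rotTwoInv_rotTwo (r i : ℕ) : rotTwoInv r (rotTwo r i) = i := by
  unfold rotTwo rotTwoInv; split_ifs <;> omega

theorem rotTwo_rotTwoInv (r i : ℕ) : rotTwo r (rotTwoInv r i) = i := by
  unfold rotTwo rotTwoInv; split_ifs <;> omega

theorem rotTwoInv_two_add : rotTwoInv r (2 + i) = if i < 2 * r then i else 2 + i := by
  unfold rotTwoInv; split_ifs <;> omega

theorem hypBlock_eq_nfEntry (a b : Fin 2) :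
    hypBlock a b = nfEntry r (s + 1) 0 p (rotTwoInv r a) (rotTwoInv r b) := by
  rw [show nfEntry r (s + 1) 0 p (rotTwoInv r a) (rotTwoInv r b) = if (a : ℕ) = b then 0 else 1 by
    unfold nfEntry rotTwoInv; split_ifs <;> omega]
  fin_cases a <;> fin_cases b <;> rfl

theorem nfEntry_succ_rotTwoInv_two_add :
    nfEntry r (s + 1) 0 p (rotTwoInv r (2 + i)) (rotTwoInv r (2 + j)) = nfEntry r s 0 p i j := by
  rw [rotTwoInv_two_add, rotTwoInv_two_add]
  split_ifs <;> (unfold nfEntry; split_ifs <;> omega)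

theorem nfEntry_succ_rotTwoInv_two_add_right (hi : i < 2) :
    nfEntry r (s + 1) 0 p (rotTwoInv r i) (rotTwoInv r (2 + j)) = 0 := by
  rw [rotTwoInv_two_add, show rotTwoInv r i = i + 2 * r by unfold rotTwoInv; simp [hi]]
  split_ifs <;> (unfold nfEntry; split_ifs <;> omega)

theorem nfEntry_succ_rotTwoInv_two_add_left (hi : i < 2) :
    nfEntry r (s + 1) 0 p (rotTwoInv r (2 + j)) (rotTwoInv r i) = 0 := by
  rw [rotTwoInv_two_add, show rotTwoInv r i = i + 2 * r by unfold rotTwoInv; simp [hi]]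
  split_ifs <;> (unfold nfEntry; split_ifs <;> omega)

end NfEntry

section Extension

variable {n r s p : ℕ} {D : Matrix (Fin n) (Fin n) (ZMod 4)}

theorem IsNormalForm.finBlockDiag_anisoBlock
    (hD : IsNormalForm (nfEntry r s 0 p) (2 * r + 2 * s + p) D) :
    IsNormalForm (nfEntry (r + 1) s 0 p) (2 * (r + 1) + 2 * s + p)
      (finBlockDiag anisoBlock D) := by
  rw [show 2 * (r + 1) + 2 * s + p = 2 + (2 * r + 2 * s + p) by ring]
  exact hD.finBlockDiag_cons anisoBlock_eq_nfEntry (fun _ _ => nfEntry_succ_two_add)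
    (fun a _ => ⟨nfEntry_succ_two_add_right a.isLt, nfEntry_succ_two_add_left a.isLt⟩)

theorem IsNormalForm.finBlockDiag_twoBlock (hD : IsNormalForm (nfEntry 0 0 0 p) p D) :
    IsNormalForm (nfEntry 0 0 0 (p + 1)) (p + 1) (finBlockDiag twoBlock D) := by
  have h := hD.finBlockDiag_cons twoBlock_eq_nfEntry (fun _ _ => nfEntry_zero_succ_one_add)
    (fun a _ => by
      rw [Fin.fin_one_eq_zero a]
      exact ⟨nfEntry_zero_succ_one_add_right, nfEntry_zero_succ_one_add_left⟩)
  rwa [Nat.add_comm 1 p] at h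

theorem IsNormalForm.exists_intCongr_finBlockDiag_hypBlock
    (hD : IsNormalForm (nfEntry r s 0 p) (2 * r + 2 * s + p) D) :
    ∃ C, IntCongr (finBlockDiag hypBlock D) C ∧
      IsNormalForm (nfEntry r (s + 1) 0 p) (2 * r + 2 * (s + 1) + p) C := by
  have hr : 2 * r ≤ n := by have := hD.1; omega
  let σ : Equiv.Perm (Fin (2 + n)) :=
    { toFun := fun i => ⟨rotTwo r i, by have := i.isLt; unfold rotTwo; split_ifs <;> omega⟩
      invFun := fun i =>
        ⟨rotTwoInv r i, by have := i.isLt; unfold rotTwoInv; split_ifs <;> omega⟩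
      left_inv := fun i => Fin.ext (rotTwoInv_rotTwo r i)
      right_inv := fun i => Fin.ext (rotTwo_rotTwoInv r i) }
  have hD' := hD.finBlockDiag_cons
    (N' := fun i j => nfEntry r (s + 1) 0 p (rotTwoInv r i) (rotTwoInv r j)) hypBlock_eq_nfEntry
    (fun _ _ => nfEntry_succ_rotTwoInv_two_add) (fun a _ =>
      ⟨nfEntry_succ_rotTwoInv_two_add_right a.isLt, nfEntry_succ_rotTwoInv_two_add_left a.isLt⟩)
  refine ⟨_, IntCongr.submatrix_equiv _ σ, ?_⟩
  rw [show 2 * r + 2 * (s + 1) + p = 2 + (2 * r + 2 * s + p) by ring]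
  refine hD'.submatrix σ (fun i hi => Fin.ext ?_) (fun i j => by simp [σ, rotTwoInv_rotTwo])
  show rotTwo r i = i
  unfold rotTwo; split_ifs <;> omega

end Extension

theorem exists_intCongr_finBlockDiag_of_odd {m : ℕ}
    {B : Matrix (Fin (2 + m)) (Fin (2 + m)) (ZMod 4)} (hB : IsEvenSymm B)
    (hodd : 2 * B (Fin.castAdd m 0) (Fin.castAdd m 1) ≠ 0) :
    ∃ (M : Matrix (Fin 2) (Fin 2) (ZMod 4)) (C : Matrix (Fin m) (Fin m) (ZMod 4)),
      (M = anisoBlock ∨ M = hypBlock) ∧ IntCongr B (finBlockDiag M C) := by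
  obtain ⟨M, hM, U, hU, hUM⟩ : ∃ M, (M = anisoBlock ∨ M = hypBlock) ∧
      IntCongr (B.submatrix (Fin.castAdd m) (Fin.castAdd m)) M := by
    rcases intCongr_anisoBlock_or_hypBlock (hB.submatrix (Fin.castAdd m)) hodd with h | h
    exacts [⟨_, .inl rfl, h⟩, ⟨_, .inr rfl, h⟩]
  have hMM : M * M = 1 := by rcases hM with rfl | rfl <;> decide
  have hMs : M.IsSymm := by rcases hM with rfl | rfl <;> decide
  exact ⟨M, _, hM, IntCongr.finBlockDiag_of_corner (ZMod.ringHom_surjective (Int.castRingHom _))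
    hB.1 hU hMs hUM.symm
    (M * ((U.map (Int.castRingHom (ZMod 4)))ᵀ * B.submatrix (Fin.castAdd m) (Fin.natAdd 2)))
    (by rw [← Matrix.mul_assoc, hMM, Matrix.one_mul])⟩

theorem exists_intCongr_finBlockDiag_twoBlock {m : ℕ}
    {B : Matrix (Fin (1 + m)) (Fin (1 + m)) (ZMod 4)} (hB : B.IsSymm) (h2B : (2 : ZMod 4) • B = 0)
    (h00 : B (Fin.castAdd m 0) (Fin.castAdd m 0) ≠ 0) :
    ∃ C : Matrix (Fin m) (Fin m) (ZMod 4), IntCongr B (finBlockDiag twoBlock C) := by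
  have half : ∀ x : ZMod 4, 2 * x = 0 → ∃ y, x = 2 * y := by decide
  have h2 : ∀ i j, 2 * B i j = 0 := fun i j => by simpa using congrFun₂ h2B i j
  choose y hy using fun j => half _ (h2 (Fin.castAdd m 0) (Fin.natAdd 1 j))
  have hcorner : B.submatrix (Fin.castAdd m) (Fin.castAdd m) = twoBlock := by
    have htwo : ∀ x : ZMod 4, 2 * x = 0 → x ≠ 0 → x = 2 := by decide
    ext a b
    rw [Fin.fin_one_eq_zero a, Fin.fin_one_eq_zero b]
    exact htwo _ (h2 _ _) h00
  refine ⟨_, IntCongr.finBlockDiag_of_corner (ZMod.ringHom_surjective (Int.castRingHom _)) hB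
    (U := 1) (by simp) (by decide : twoBlock.IsSymm) (by simpa using hcorner)
    (Matrix.of fun _ j => y j) ?_⟩
  ext a j
  rw [Fin.fin_one_eq_zero a]
  simp [twoBlock, hy, Matrix.mul_apply]

theorem exists_intCongr_isNormalForm_of_two_smul_eq_zero {n : ℕ}
    (B : Matrix (Fin n) (Fin n) (ZMod 4)) (hB : B.IsSymm) (h2B : (2 : ZMod 4) • B = 0) :
    ∃ (p : ℕ) (C : Matrix (Fin n) (Fin n) (ZMod 4)),
      IntCongr B C ∧ IsNormalForm (nfEntry 0 0 0 p) p C := by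
  induction n using Nat.strong_induction_on with
  | _ n ih =>
  have h2 : ∀ i j, 2 * B i j = 0 := fun i j => by simpa using congrFun₂ h2B i j
  by_cases hdiag : ∀ i, B i i = 0
  · have heven : ∀ x : ZMod 4, 2 * x = 0 → x = 0 ∨ x = 2 := by decide
    exact ⟨0, B, .refl B, Nat.zero_le n, fun i _ hi => absurd hi (Nat.not_lt_zero _),
      fun i _ hi => absurd hi (Nat.not_lt_zero _), fun i _ => hdiag i,
      fun i j _ _ _ => heven _ (h2 i j)⟩
  push Not at hdiag
  obtain ⟨i, hi⟩ := hdiag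
  obtain ⟨m, rfl⟩ : ∃ m, n = 1 + m := ⟨n - 1, by have := i.isLt; omega⟩
  let σ := Equiv.swap (Fin.castAdd m 0) i
  obtain ⟨C, hC⟩ := exists_intCongr_finBlockDiag_twoBlock (hB.submatrix σ)
    (by ext a b; simpa using congrFun₂ h2B (σ a) (σ b)) (by simpa [σ] using hi)
  have h₁ := (IntCongr.submatrix_equiv B σ).trans hC
  obtain ⟨p, D, hD, hNF⟩ := ih m (by omega) C
    (by simpa only [finBlockDiag_submatrix_natAdd] using
      (h₁.isSymm hB).submatrix (Fin.natAdd 1))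
    (by ext a b; simpa using congrFun₂ (h₁.smul_eq_zero h2B) (Fin.natAdd 1 a) (Fin.natAdd 1 b))
  exact ⟨p + 1, _, h₁.trans (hD.finBlockDiag_right twoBlock), hNF.finBlockDiag_twoBlock⟩

theorem exists_intCongr_isNormalForm {n : ℕ} (B : Matrix (Fin n) (Fin n) (ZMod 4))
    (hB : IsEvenSymm B) :
    ∃ (r s p : ℕ) (C : Matrix (Fin n) (Fin n) (ZMod 4)),
      IntCongr B C ∧ IsNormalForm (nfEntry r s 0 p) (2 * r + 2 * s + p) C := by
  induction n using Nat.strong_induction_on with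
  | _ n ih =>
  by_cases hodd : ∃ i j, 2 * B i j ≠ 0
  · obtain ⟨i, j, hij⟩ := hodd
    have hne : i ≠ j := by rintro rfl; exact hij (hB.2 i)
    obtain ⟨m, rfl⟩ : ∃ m, n = 2 + m :=
      ⟨n - 2, by have := Fin.val_ne_of_ne hne; have := i.isLt; have := j.isLt; omega⟩
    obtain ⟨σ, hσ⟩ := Equiv.Perm.exists_extending_pair (Fin.castAdd m) ![i, j]
      (Fin.castAdd_injective 2 m) (by
        intro a b; fin_cases a <;> fin_cases b <;> simp [hne, hne.symm])
    obtain ⟨M, C, hM, hC⟩ :=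
      exists_intCongr_finBlockDiag_of_odd (hB.submatrix σ) (by simpa [hσ] using hij)
    have h₁ := (IntCongr.submatrix_equiv B σ).trans hC
    obtain ⟨r, s, p, D, hD, hNF⟩ := ih m (by omega) C
      (by simpa only [finBlockDiag_submatrix_natAdd] using
        (h₁.isEvenSymm hB).submatrix (Fin.natAdd 2))
    have h₂ := h₁.trans (hD.finBlockDiag_right M)
    rcases hM with rfl | rfl
    · exact ⟨r + 1, s, p, _, h₂, hNF.finBlockDiag_anisoBlock⟩
    · obtain ⟨G, hG, hNF'⟩ := hNF.exists_intCongr_finBlockDiag_hypBlock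
      exact ⟨r, s + 1, p, G, h₂.trans hG, hNF'⟩
  · push Not at hodd
    obtain ⟨p, C, hC, hNF⟩ := exists_intCongr_isNormalForm_of_two_smul_eq_zero B hB.1
      (by ext i j; simpa using hodd i j)
    exact ⟨0, 0, p, C, hC, by simpa using hNF⟩

open Matrix in
/-- Lemma 2.1: congruence mod 4 to diag(r·[[2,1],[1,2]], s·[[0,1],[1,0]], p·[2], Z)
where Z has diagonal ≡ 0 (mod 4) and off-diagonal entries ≡ 0 or 2 (mod 4). -/
theorem stmt_1 (n : ℕ) (A : Matrix (Fin n) (Fin n) ℤ)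
    (hsym : A.IsSymm) (hdiag : ∀ i, Even (A i i)) :
    ∃ P : Matrix (Fin n) (Fin n) ℤ, (P.det = 1 ∨ P.det = -1) ∧
      ∃ r s p : ℕ, 2*r + 2*s + p ≤ n ∧
        (∀ i j : Fin n, (i : ℕ) < 2*r + 2*s + p → (j : ℕ) < 2*r + 2*s + p →
          (((Pᵀ * A * P) i j : ℤ) : ZMod 4) = ((nfEntry r s 0 p (i : ℕ) (j : ℕ) : ℤ) : ZMod 4)) ∧
        (∀ i j : Fin n, (i : ℕ) < 2*r + 2*s + p → 2*r + 2*s + p ≤ (j : ℕ) →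
          (((Pᵀ * A * P) i j : ℤ) : ZMod 4) = 0 ∧ (((Pᵀ * A * P) j i : ℤ) : ZMod 4) = 0) ∧
        (∀ i : Fin n, 2*r + 2*s + p ≤ (i : ℕ) →
          (((Pᵀ * A * P) i i : ℤ) : ZMod 4) = 0) ∧
        (∀ i j : Fin n, 2*r + 2*s + p ≤ (i : ℕ) → 2*r + 2*s + p ≤ (j : ℕ) → i ≠ j →
          (((Pᵀ * A * P) i j : ℤ) : ZMod 4) = 0 ∨ (((Pᵀ * A * P) i j : ℤ) : ZMod 4) = 2) := by
  have hA : IsEvenSymm (A.map (Int.castRingHom (ZMod 4))) := by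
    refine ⟨hsym.map _, fun i => ?_⟩
    obtain ⟨k, hk⟩ := hdiag i
    have h : ∀ x : ZMod 4, 2 * (x + x) = 0 := by decide
    simpa [hk] using h k
  obtain ⟨r, s, p, _, ⟨P, hP, rfl⟩, hNF⟩ := exists_intCongr_isNormalForm _ hA
  rw [← transpose_map, ← Matrix.map_mul, ← Matrix.map_mul] at hNF
  exact ⟨P, Int.isUnit_iff.mp hP, r, s, p, hNF⟩
end

section
/- Let Z be a symmetric n×n integer matrix such that every diagonal entry of Z is ≡ 0 mod 4 and every off-diagonal entry is ≡ 0 or 2 mod 4. Then there exists an integer matrix P with det(P) = ±1 such that P^T Z P modulo 4 equals the block diagonal matrix diag(t·[[0,2],[2,0]], m·[0]) for some non-negative integers t, m with 2t + m = n. -/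
/-!
All entries of `Z` are even, so `Z = 2 Y` and `Pᵀ Z P mod 4` only depends on `Pᵀ Y P mod 2`,
where `Y mod 2` is symmetric with zero diagonal, i.e. alternating over `𝔽₂`. An alternating matrix
over `𝔽₂` with a nonzero entry `Y i j = 1` splits off a hyperbolic plane: move `(i, j)` to
`(0, 1)`, write the matrix as `[[H, C], [Cᵀ, D]]` with `H = [[0, 1], [1, 0]] = H⁻¹`, and clear `C`
with the block matrix `[[1, -H C], [0, 1]]`, whose entries lift to `ℤ`. What is left is the Schur
complement `D - Cᵀ H C`, again alternating, and induction finishes.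
-/

open Matrix

namespace Matrix

variable {ι κ R : Type*} [CommRing R]

theorem IsSymm.transpose_eq_neg_mod_two {A : Matrix ι ι (ZMod 2)} (hA : A.IsSymm) : Aᵀ = -A := by
  ext i j
  rw [hA.eq, neg_apply, ZMod.neg_eq_self_mod_two]

variable [Fintype ι] [Fintype κ]

theorem IsSymm.transpose_mul_mul {A : Matrix ι ι R} (hA : A.IsSymm) (P : Matrix ι ι R) :
    (Pᵀ * A * P).IsSymm := by
  simp [IsSymm, transpose_mul, hA.eq, Matrix.mul_assoc]

theorem transpose_mul_mul_apply_self_eq_zero {A : Matrix ι ι R} (hA : Aᵀ = -A)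
    (hdiag : ∀ i, A i i = 0) (P : Matrix ι ι R) (i : ι) : (Pᵀ * A * P) i i = 0 := by
  have hskew : ∀ k l, A l k = -A k l := fun k l => by
    rw [← transpose_apply A, hA, neg_apply]
  simp_rw [mul_apply, Finset.sum_mul, ← Finset.sum_product', transpose_apply]
  refine Finset.sum_ninvolution Prod.swap (fun kl => ?_) (fun kl hkl heq => hkl ?_)
    (fun _ => Finset.mem_univ _) Prod.swap_swap
  · simp only [Prod.fst_swap, Prod.snd_swap, hskew kl.1 kl.2]; ring
  · obtain ⟨k, l⟩ := kl
    obtain rfl : k = l := (Prod.ext_iff.mp heq).2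
    simp [hdiag]

theorem map_intCast_mul (P Q : Matrix ι ι ℤ) :
    (P * Q).map (Int.cast : ℤ → R) = P.map Int.cast * Q.map Int.cast :=
  Matrix.map_mul (f := Int.castRingHom R)

variable [DecidableEq ι] [DecidableEq κ]

def IntCongruent (A B : Matrix ι ι R) : Prop :=
  ∃ P : Matrix ι ι ℤ, IsUnit P.det ∧ (P.map (Int.cast : ℤ → R))ᵀ * A * P.map Int.cast = B

namespace IntCongruent

theorem refl (A : Matrix ι ι R) : IntCongruent A A :=
  ⟨1, by simp, by simp⟩

theorem trans {A B C : Matrix ι ι R} (hAB : IntCongruent A B) (hBC : IntCongruent B C) :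
    IntCongruent A C := by
  obtain ⟨P, hP, rfl⟩ := hAB
  obtain ⟨Q, hQ, rfl⟩ := hBC
  refine ⟨P * Q, by simpa [det_mul] using hP.mul hQ, ?_⟩
  simp only [map_intCast_mul, transpose_mul, Matrix.mul_assoc]

theorem submatrix {A B : Matrix ι ι R} (h : IntCongruent A B) (e : κ ≃ ι) :
    IntCongruent (A.submatrix e e) (B.submatrix e e) := by
  obtain ⟨P, hP, rfl⟩ := h
  refine ⟨P.submatrix e e, by rwa [det_submatrix_equiv_self], ?_⟩
  simp [← submatrix_map, transpose_submatrix, submatrix_mul_equiv]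

theorem fromBlocks {A A' : Matrix ι ι R} {B B' : Matrix κ κ R} (hA : IntCongruent A A')
    (hB : IntCongruent B B') :
    IntCongruent (Matrix.fromBlocks A 0 0 B) (Matrix.fromBlocks A' 0 0 B') := by
  obtain ⟨P, hP, rfl⟩ := hA
  obtain ⟨Q, hQ, rfl⟩ := hB
  refine ⟨Matrix.fromBlocks P 0 0 Q, by simpa [det_fromBlocks_zero₂₁] using hP.mul hQ, ?_⟩
  simp [fromBlocks_map, fromBlocks_transpose, fromBlocks_multiply]

end IntCongruent

theorem intCongruent_submatrix_perm (A : Matrix ι ι R) (σ : Equiv.Perm ι) :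
    IntCongruent A (A.submatrix σ σ) := by
  refine ⟨(1 : Matrix ι ι ℤ).submatrix id σ, ?_, ?_⟩
  · rw [det_permute', det_one, mul_one]
    exact (Equiv.Perm.sign σ).isUnit
  · rw [← submatrix_map, transpose_submatrix, Matrix.map_one _ Int.cast_zero Int.cast_one,
      transpose_one]
    have h₁ := one_submatrix_mul σ (Equiv.refl ι) A
    have h₂ := mul_submatrix_one (Equiv.refl ι) σ (A.submatrix σ id)
    simp only [Equiv.coe_refl, Equiv.refl_symm, Function.id_comp] at h₁ h₂
    rw [h₁, h₂, submatrix_submatrix]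
    rfl


end Matrix

theorem Equiv.Perm.exists_apply_eq_and_apply_eq {α : Type*} [DecidableEq α] {a b i j : α}
    (hab : a ≠ b) (hij : i ≠ j) : ∃ σ : Perm α, σ a = i ∧ σ b = j := by
  refine ⟨swap (swap a i b) j * swap a i, ?_, by simp [Perm.mul_apply]⟩
  have : swap a i b ≠ i := by simpa using ((swap a i).injective.ne hab).symm
  rw [Perm.mul_apply, swap_apply_left, swap_apply_of_ne_of_ne this.symm hij]

def hyperbolicEntry (t i j : ℕ) : ℤ :=
  if i ≠ j ∧ i / 2 = j / 2 ∧ i < 2 * t then 1 else 0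

def hyperbolicNF (n t : ℕ) : Matrix (Fin n) (Fin n) (ZMod 2) :=
  of fun i j => (hyperbolicEntry t i j : ZMod 2)

theorem hyperbolicNF_zero (n : ℕ) : hyperbolicNF n 0 = 0 := by
  ext; simp [hyperbolicNF, hyperbolicEntry]

theorem submatrix_finSumFinEquiv_hyperbolicNF (m t : ℕ) :
    (hyperbolicNF (2 + m) (t + 1)).submatrix finSumFinEquiv finSumFinEquiv =
      fromBlocks (hyperbolicNF 2 1) 0 0 (hyperbolicNF m t) := by
  ext (a | k) (b | l) <;>
    simp only [hyperbolicNF, hyperbolicEntry, submatrix_apply, of_apply, fromBlocks_apply₁₁,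
      fromBlocks_apply₁₂, fromBlocks_apply₂₁, fromBlocks_apply₂₂, Matrix.zero_apply,
      finSumFinEquiv_apply_left, finSumFinEquiv_apply_right, Fin.val_castAdd, Fin.val_natAdd] <;>
    split_ifs <;> first | rfl | omega

theorem exists_intCongruent_fromBlocks_hyperbolicNF {κ : Type*} [Fintype κ] [DecidableEq κ]
    (B : Matrix (Fin 2 ⊕ κ) (Fin 2 ⊕ κ) (ZMod 2)) (hB : B.IsSymm) (hdiag : ∀ i, B i i = 0)
    (hpivot : B (.inl 0) (.inl 1) = 1) :
    ∃ D : Matrix κ κ (ZMod 2), D.IsSymm ∧ (∀ k, D k k = 0) ∧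
      IntCongruent B (fromBlocks (hyperbolicNF 2 1) 0 0 D) := by
  set H := hyperbolicNF 2 1
  have hHH : H * H = 1 := by decide
  have hHt : Hᵀ = H := by decide
  set C := B.toBlocks₁₂
  have hB_blocks : B = fromBlocks H C Cᵀ B.toBlocks₂₂ := by
    conv_lhs => rw [← fromBlocks_toBlocks B]
    congr 1
    · ext a b
      fin_cases a <;> fin_cases b <;>
        simp [toBlocks₁₁, H, hyperbolicNF, hyperbolicEntry, hdiag, hpivot,
          hB.apply (.inl 0) (.inl 1)]
    · ext k a
      simp [C, toBlocks₂₁, toBlocks₁₂, ← hB.apply (.inr k)]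
  set X : Matrix (Fin 2) κ ℤ := (-(H * C)).map fun x => (x.val : ℤ)
  have hX : X.map Int.cast = -(H * C) := by ext; simp [X]
  set P : Matrix (Fin 2 ⊕ κ) (Fin 2 ⊕ κ) ℤ := fromBlocks 1 X 0 1
  have hW : (P.map (Int.cast : ℤ → ZMod 2))ᵀ * B * P.map Int.cast =
      fromBlocks H 0 0 (B.toBlocks₂₂ - Cᵀ * H * C) := by
    rw [hB_blocks]
    simp [P, fromBlocks_map, hX, fromBlocks_transpose, fromBlocks_multiply, hHt,
      ← Matrix.mul_assoc, hHH]
    simp [Matrix.mul_assoc, hHH, sub_eq_neg_add]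
  have hWsymm := hB.transpose_mul_mul (P.map Int.cast)
  have hWdiag :=
    transpose_mul_mul_apply_self_eq_zero hB.transpose_eq_neg_mod_two hdiag (P.map Int.cast)
  rw [hW] at hWsymm hWdiag
  refine ⟨_, (isSymm_fromBlocks_iff.mp hWsymm).2.2.2, fun k => hWdiag (.inr k), P, ?_, hW⟩
  simp [P]

theorem exists_intCongruent_hyperbolicNF (n : ℕ) (B : Matrix (Fin n) (Fin n) (ZMod 2))
    (hB : B.IsSymm) (hdiag : ∀ i, B i i = 0) :
    ∃ t, 2 * t ≤ n ∧ IntCongruent B (hyperbolicNF n t) := by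
  induction n using Nat.strong_induction_on with
  | _ n ih =>
  by_cases hB0 : B = 0
  · exact ⟨0, by omega, by rw [hB0, hyperbolicNF_zero]; exact .refl 0⟩
  obtain ⟨i, j, hij⟩ : ∃ i j, B i j ≠ 0 := by
    by_contra! h
    exact hB0 (ext h)
  have hij_one : B i j = 1 := (by decide : ∀ x : ZMod 2, x ≠ 0 → x = 1) _ hij
  have hne : i ≠ j := by
    rintro rfl
    exact hij (hdiag i)
  obtain ⟨m, rfl⟩ : ∃ m, n = 2 + m :=
    ⟨n - 2, by have := Fin.val_ne_of_ne hne; omega⟩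
  obtain ⟨σ, hσ0, hσ1⟩ := Equiv.Perm.exists_apply_eq_and_apply_eq
    (finSumFinEquiv.injective.ne (Sum.inl_injective.ne (by decide : (0 : Fin 2) ≠ 1))) hne
  obtain ⟨D, hDsymm, hDdiag, hBD⟩ := exists_intCongruent_fromBlocks_hyperbolicNF
    ((B.submatrix σ σ).submatrix finSumFinEquiv finSumFinEquiv) ((hB.submatrix σ).submatrix _)
    (fun _ => hdiag _) (by simp only [submatrix_apply, hσ0, hσ1, hij_one])
  obtain ⟨t, ht, hDt⟩ := ih m (by omega) D hDsymm hDdiag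
  refine ⟨t + 1, by omega, (intCongruent_submatrix_perm B σ).trans ?_⟩
  have := (hBD.trans ((IntCongruent.refl _).fromBlocks hDt)).submatrix finSumFinEquiv.symm
  simpa [← submatrix_finSumFinEquiv_hyperbolicNF, submatrix_submatrix, Function.comp_assoc]
    using this

theorem nfEntry_zero_zero_zero (t i j : ℕ) : nfEntry 0 0 t 0 i j = 2 * hyperbolicEntry t i j := by
  unfold nfEntry hyperbolicEntry
  split_ifs <;> omega

theorem Int.two_mul_intCast_zmod_four_eq {a b : ℤ} (h : (a : ZMod 2) = b) :
    ((2 * a : ℤ) : ZMod 4) = ((2 * b : ℤ) : ZMod 4) := by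
  rw [ZMod.intCast_eq_intCast_iff] at h ⊢
  exact h.mul_left' (c := 2)

theorem Int.two_dvd_of_intCast_zmod_four {x : ℤ} (h : (x : ZMod 4) = 0 ∨ (x : ZMod 4) = 2) :
    2 ∣ x := by
  have : (x : ZMod 2) = 0 := by
    rw [← map_intCast (ZMod.castHom (by norm_num : 2 ∣ 4) (ZMod 2))]
    rcases h with h | h <;> rw [h] <;> decide
  exact_mod_cast (ZMod.intCast_zmod_eq_zero_iff_dvd x 2).mp this

theorem exists_eq_two_smul_of_intCast_zmod_four {ι : Type*} (Z : Matrix ι ι ℤ) (hsym : Z.IsSymm)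
    (hdiag : ∀ i, (Z i i : ZMod 4) = 0)
    (hoff : ∀ i j, i ≠ j → (Z i j : ZMod 4) = 0 ∨ (Z i j : ZMod 4) = 2) :
    ∃ Y : Matrix ι ι ℤ, Y.IsSymm ∧ (∀ i, (Y i i : ZMod 2) = 0) ∧ Z = (2 : ℤ) • Y := by
  have heven : ∀ i j, 2 ∣ Z i j := fun i j => Int.two_dvd_of_intCast_zmod_four <| by
    rcases eq_or_ne i j with rfl | hij
    exacts [.inl (hdiag i), hoff i j hij]
  refine ⟨Z.map (· / 2), hsym.map _, fun i => ?_,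
    ext fun i j => (Int.mul_ediv_cancel' (heven i j)).symm⟩
  have h4 : (4 : ℤ) ∣ 2 * (Z i i / 2) := by
    rw [Int.mul_ediv_cancel' (heven i i)]
    exact_mod_cast (ZMod.intCast_zmod_eq_zero_iff_dvd _ 4).mp (hdiag i)
  exact (ZMod.intCast_zmod_eq_zero_iff_dvd (Z i i / 2) 2).mpr (by push_cast; omega)

open Matrix in
/-- Lemma 2.2: a symmetric integer matrix whose diagonal entries are ≡ 0 (mod 4)
and whose off-diagonal entries are ≡ 0 or 2 (mod 4) is congruent, mod 4, to
diag(t·[[0,2],[2,0]], m·[0]) with 2t + m = n. -/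
theorem stmt_2 (n : ℕ) (Z : Matrix (Fin n) (Fin n) ℤ)
    (hsym : Z.IsSymm)
    (hdiag : ∀ i, ((Z i i : ℤ) : ZMod 4) = 0)
    (hoff : ∀ i j, i ≠ j → ((Z i j : ℤ) : ZMod 4) = 0 ∨ ((Z i j : ℤ) : ZMod 4) = 2) :
    ∃ P : Matrix (Fin n) (Fin n) ℤ, (P.det = 1 ∨ P.det = -1) ∧
      ∃ t m : ℕ, 2*t + m = n ∧
        ∀ i j : Fin n,
          (((Pᵀ * Z * P) i j : ℤ) : ZMod 4) = ((nfEntry 0 0 t 0 (i : ℕ) (j : ℕ) : ℤ) : ZMod 4) := by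
  obtain ⟨Y, hYsymm, hYdiag, rfl⟩ := exists_eq_two_smul_of_intCast_zmod_four Z hsym hdiag hoff
  obtain ⟨t, ht, P, hP, hPY⟩ :=
    exists_intCongruent_hyperbolicNF n (Y.map Int.cast) (hYsymm.map _) hYdiag
  refine ⟨P, Int.isUnit_iff.mp hP, t, n - 2 * t, by omega, fun i j => ?_⟩
  rw [Matrix.mul_smul, Matrix.smul_mul, Matrix.smul_apply, smul_eq_mul, nfEntry_zero_zero_zero]
  refine Int.two_mul_intCast_zmod_four_eq ?_
  rw [← transpose_map, ← map_intCast_mul, ← map_intCast_mul] at hPY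
  exact congrFun (congrFun hPY i) j
end

section
/- Let A be a symmetric integer matrix congruent modulo 4 to diag(r·[[2,1],[1,2]], s·[[0,1],[1,0]], t·[[0,2],[2,0]], p·[2], m·[0]) with p ≥ 3. Then there is an integer matrix P with det(P) = ±1 such that P^T A P modulo 4 equals diag(r·[[2,1],[1,2]], s·[[0,1],[1,0]], (t+1)·[[0,2],[2,0]], (p−2)·[2], m·[0]). -/
namespace Matrix

variable {ι R : Type*} [Fintype ι] [DecidableEq ι] [CommRing R]

lemma transpose_one_add_mul_mul_one_add {M K : Matrix ι ι R} {d : R}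
    (hMK : M * K = d • K) (hKM : Kᵀ * M = d • Kᵀ) :
    (1 + K)ᵀ * M * (1 + K) = M + d • (K + Kᵀ + Kᵀ * K) := by
  simp only [transpose_add, transpose_one, add_mul, mul_add, one_mul, mul_one, hMK, hKM,
    smul_mul]
  module

lemma mul_single_eq_smul {M : Matrix ι ι R} {x : ι} {d : R}
    (hcol : ∀ i, M i x = if i = x then d else 0) (y : ι) (c : R) :
    M * single x y c = d • single x y c := by
  ext i j
  rcases eq_or_ne j y with rfl | hj
  · simp [hcol, single_apply, eq_comm]
  · simp [hj, Ne.symm hj]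

lemma single_mul_eq_smul {M : Matrix ι ι R} {y : ι} {d : R}
    (hrow : ∀ j, M y j = if j = y then d else 0) (x : ι) (c : R) :
    single x y c * M = d • single x y c := by
  ext i j
  rcases eq_or_ne i x with rfl | hi
  · simp [hrow, single_apply, eq_comm, mul_comm]
  · simp [hi, Ne.symm hi]

/-- The columns at `a`, `b`, `c` are `e a + e b`, `e b + e c` and `e a + e b + e c`. -/
def hyperbolicBasisChange (a b c : ι) : Matrix ι ι R :=
  transvection b a 1 * transvection c b 1 * transvection a c 1

variable {a b c : ι}

lemma det_hyperbolicBasisChange (hab : a ≠ b) (hbc : b ≠ c) (hac : a ≠ c) :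
    (hyperbolicBasisChange a b c : Matrix ι ι R).det = 1 := by
  rw [hyperbolicBasisChange, det_mul, det_mul, det_transvection_of_ne _ _ hab.symm,
    det_transvection_of_ne _ _ hbc.symm, det_transvection_of_ne _ _ hac, one_mul, one_mul]

lemma hyperbolicBasisChange_eq (hab : a ≠ b) (hac : a ≠ c) :
    (hyperbolicBasisChange a b c : Matrix ι ι R)
      = 1 + (single b a 1 + single c b 1 + single a c 1 + single b c 1) := by
  simp only [hyperbolicBasisChange, transvection, mul_add, mul_one, add_mul, one_mul, ne_eq, hac,
    hab.symm, not_false_eq_true, single_mul_single_of_ne, single_mul_single_same, add_zero]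
  abel

lemma transpose_hyperbolicBasisChange_mul_mul (hab : a ≠ b) (hbc : b ≠ c) (hac : a ≠ c)
    {M : Matrix ι ι R} {d : R}
    (hrow : ∀ x ∈ ({a, b, c} : Finset ι), ∀ j, M x j = if j = x then d else 0)
    (hcol : ∀ x ∈ ({a, b, c} : Finset ι), ∀ i, M i x = if i = x then d else 0) :
    (hyperbolicBasisChange a b c)ᵀ * M * hyperbolicBasisChange a b c
      = M + d • (single a a 1 + single b b 1 + single a b 1 + single b a 1)
        + (2 * d) • (single a c 1 + single c a 1 + single b c 1 + single c b 1
          + single c c 1) := by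
  simp only [Finset.mem_insert, Finset.mem_singleton, forall_eq_or_imp, forall_eq] at hrow hcol
  obtain ⟨ha, hb, hc⟩ := hrow
  obtain ⟨ha', hb', hc'⟩ := hcol
  set K : Matrix ι ι R := single b a 1 + single c b 1 + single a c 1 + single b c 1
  have hMK : M * K = d • K := by
    simp only [K, mul_add, mul_single_eq_smul ha', mul_single_eq_smul hb',
      mul_single_eq_smul hc', smul_add]
  have hKM : Kᵀ * M = d • Kᵀ := by
    simp only [K, transpose_add, transpose_single, add_mul, single_mul_eq_smul ha,
      single_mul_eq_smul hb, single_mul_eq_smul hc, smul_add]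
  have hKK : Kᵀ * K
      = single a a 1 + single b b 1 + 2 • single c c 1 + single a c 1 + single c a 1 := by
    simp only [K, transpose_add, transpose_single, add_mul, mul_add, single_mul_single_same,
      single_mul_single_of_ne, hab, hbc, hac, hab.symm, hbc.symm, hac.symm, ne_eq,
      not_false_eq_true, mul_one]
    abel
  rw [hyperbolicBasisChange_eq hab hac, transpose_one_add_mul_mul_one_add hMK hKM, hKK]
  simp only [K, transpose_add, transpose_single]
  module

end Matrix

lemma nfEntry_symm (r s t p i j : ℕ) : nfEntry r s t p i j = nfEntry r s t p j i := by
  unfold nfEntry; split_ifs <;> omega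

lemma nfEntry_of_mem_Ico {r s t p i : ℕ} (hp : 3 ≤ p)
    (hi : i ∈ Finset.Ico (2*r+2*s+2*t) (2*r+2*s+2*t+3)) (j : ℕ) :
    nfEntry r s t p i j = if j = i then 2 else 0 := by
  rw [Finset.mem_Ico] at hi
  unfold nfEntry; split_ifs <;> omega

lemma nfEntry_succ_sub_two {r s t p : ℕ} (hp : 2 ≤ p) (i j : ℕ) :
    nfEntry r s (t+1) (p-2) i j = nfEntry r s t p i j
      + 2 * ((if i = 2*r+2*s+2*t ∧ j = 2*r+2*s+2*t+1 then 1 else 0)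
        + (if i = 2*r+2*s+2*t+1 ∧ j = 2*r+2*s+2*t then 1 else 0)
        - (if i = 2*r+2*s+2*t ∧ j = 2*r+2*s+2*t then 1 else 0)
        - (if i = 2*r+2*s+2*t+1 ∧ j = 2*r+2*s+2*t+1 then 1 else 0)) := by
  unfold nfEntry; split_ifs <;> omega

open Matrix in
lemma of_nfEntry_succ_sub_two {n r s t p : ℕ} (hp : 2 ≤ p) {a b : Fin n}
    (ha : (a : ℕ) = 2*r+2*s+2*t) (hb : (b : ℕ) = 2*r+2*s+2*t+1) :
    of (fun i j : Fin n => nfEntry r s (t+1) (p-2) i j)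
      = of (fun i j : Fin n => nfEntry r s t p i j)
        + (2 : ℤ) • (single a b 1 + single b a 1)
        - (2 : ℤ) • (single a a 1 + single b b 1) := by
  ext i j
  simp only [of_apply, Matrix.add_apply, Matrix.sub_apply, Matrix.smul_apply, smul_eq_mul,
    single_apply, Fin.ext_iff, ha, hb, nfEntry_succ_sub_two hp]
  split_ifs <;> omega

open Matrix in
lemma transpose_hyperbolicBasisChange_mul_nfEntry_mul {n r s t p : ℕ} (hp : 3 ≤ p)
    {a b c : Fin n} (ha : (a : ℕ) = 2*r+2*s+2*t) (hb : (b : ℕ) = 2*r+2*s+2*t+1)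
    (hc : (c : ℕ) = 2*r+2*s+2*t+2) :
    (hyperbolicBasisChange a b c)ᵀ * of (fun i j : Fin n => nfEntry r s t p i j)
        * hyperbolicBasisChange a b c
      = of (fun i j : Fin n => nfEntry r s (t+1) (p-2) i j)
        + (4 : ℤ) • (single a a 1 + single b b 1 + single a c 1 + single c a 1 + single b c 1
          + single c b 1 + single c c 1) := by
  have hrow : ∀ x ∈ ({a, b, c} : Finset (Fin n)), ∀ j,
      of (fun i j : Fin n => nfEntry r s t p i j) x j = if j = x then 2 else 0 := by
    intro x hx j
    have hx' : (x : ℕ) ∈ Finset.Ico (2*r+2*s+2*t) (2*r+2*s+2*t+3) := by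
      simp only [Finset.mem_insert, Finset.mem_singleton] at hx
      rcases hx with rfl | rfl | rfl <;> simp [ha, hb, hc]
    simp only [of_apply, nfEntry_of_mem_Ico hp hx', Fin.val_inj]
  rw [transpose_hyperbolicBasisChange_mul_mul (by omega) (by omega) (by omega) hrow
    (fun x hx i => (nfEntry_symm ..).trans (hrow x hx i)),
    of_nfEntry_succ_sub_two (by omega) ha hb]
  module

open Matrix in
theorem stmt_4_general (n r s t p m : ℕ) (A : Matrix (Fin n) (Fin n) ℤ)
    (hn : n = 2*r + 2*s + 2*t + p + m)
    (hge : 3 ≤ p)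
    (hA : ∀ i j : Fin n,
      ((A i j : ℤ) : ZMod 4) = ((nfEntry r s t p (i : ℕ) (j : ℕ) : ℤ) : ZMod 4)) :
    ∃ P : Matrix (Fin n) (Fin n) ℤ, (P.det = 1 ∨ P.det = -1) ∧
      ∀ i j : Fin n,
        (((Pᵀ * A * P) i j : ℤ) : ZMod 4) = ((nfEntry r s (t+1) (p-2) (i : ℕ) (j : ℕ) : ℤ) : ZMod 4) := by
  let a : Fin n := ⟨2*r+2*s+2*t, by omega⟩
  let b : Fin n := ⟨2*r+2*s+2*t+1, by omega⟩
  let c : Fin n := ⟨2*r+2*s+2*t+2, by omega⟩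
  let N := of (fun i j : Fin n => nfEntry r s t p i j)
  let P : Matrix (Fin n) (Fin n) ℤ := hyperbolicBasisChange a b c
  have hab : a ≠ b := by simp [a, b, Fin.ext_iff]
  have hbc : b ≠ c := by simp [b, c, Fin.ext_iff]
  have hac : a ≠ c := by simp [a, c, Fin.ext_iff]
  have hNP := transpose_hyperbolicBasisChange_mul_nfEntry_mul (a := a) (b := b) (c := c)
    hge rfl rfl rfl
  refine ⟨P, Or.inl (det_hyperbolicBasisChange hab hbc hac), fun i j => ?_⟩
  have hAN : (Pᵀ * A * P).map (Int.castRingHom (ZMod 4))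
      = (Pᵀ * N * P).map (Int.castRingHom (ZMod 4)) := by
    have hmap : A.map (Int.castRingHom (ZMod 4)) = N.map (Int.castRingHom (ZMod 4)) := by
      ext; simp [N, hA]
    simp only [Matrix.map_mul, hmap]
  calc (((Pᵀ * A * P) i j : ℤ) : ZMod 4) = (((Pᵀ * N * P) i j : ℤ) : ZMod 4) :=
        congrFun (congrFun hAN i) j
    _ = _ := by
      rw [hNP, Matrix.add_apply, Matrix.smul_apply, smul_eq_mul, Int.cast_add, Int.cast_mul,
        show ((4 : ℤ) : ZMod 4) = 0 by decide, zero_mul, add_zero, of_apply]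

open Matrix in
/-- Lemma 2.3: if p ≥ 3 then two 1×1 blocks [2] can be traded for one block [[0,2],[2,0]]. -/
theorem stmt_4 (n r s t p m : ℕ) (A : Matrix (Fin n) (Fin n) ℤ)
    (hsym : A.IsSymm)
    (hn : n = 2*r + 2*s + 2*t + p + m)
    (hge : 3 ≤ p)
    (hA : ∀ i j : Fin n,
      ((A i j : ℤ) : ZMod 4) = ((nfEntry r s t p (i : ℕ) (j : ℕ) : ℤ) : ZMod 4)) :
    ∃ P : Matrix (Fin n) (Fin n) ℤ, (P.det = 1 ∨ P.det = -1) ∧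
      ∀ i j : Fin n,
        (((Pᵀ * A * P) i j : ℤ) : ZMod 4) = ((nfEntry r s (t+1) (p-2) (i : ℕ) (j : ℕ) : ℤ) : ZMod 4) :=
  stmt_4_general n r s t p m A hn hge hA
end

section
/- Let A be a symmetric integer matrix such that A modulo 4 equals diag(r·[[2,1],[1,2]], s·[[0,1],[1,0]], t·[[0,2],[2,0]], p·[2], m·[0]) with r ≥ 2. Then there is an integer matrix P with det(P) = ±1 such that P^T A P modulo 4 equals diag((r−2)·[[2,1],[1,2]], (s+2)·[[0,1],[1,0]], t·[[0,2],[2,0]], p·[2], m·[0]). -/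
open Matrix

section BlockExtend

variable {ι κ ν R : Type*}

def Matrix.blockExtend [DecidableEq ν] [Zero R] [One R] (e : ι ≃ κ ⊕ ν)
    (Q : Matrix κ κ R) : Matrix ι ι R :=
  reindex e.symm e.symm (fromBlocks Q 0 0 1)

theorem Matrix.det_blockExtend [Fintype ι] [Fintype κ] [Fintype ν] [DecidableEq ι]
    [DecidableEq κ] [DecidableEq ν] [CommRing R] (e : ι ≃ κ ⊕ ν) (Q : Matrix κ κ R) :
    (blockExtend e Q).det = Q.det := by
  rw [blockExtend, det_reindex_self, det_fromBlocks_zero₂₁, det_one, mul_one]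

theorem Matrix.map_blockExtend [DecidableEq ν] {S : Type*} [NonAssocSemiring R]
    [NonAssocSemiring S] (f : R →+* S) (e : ι ≃ κ ⊕ ν) (Q : Matrix κ κ R) :
    (blockExtend e Q).map f = blockExtend e (Q.map f) := by
  rw [blockExtend, blockExtend, reindex_apply, reindex_apply, ← submatrix_map, fromBlocks_map,
    Matrix.map_zero _ f.map_zero, Matrix.map_zero _ f.map_zero,
    Matrix.map_one _ f.map_zero f.map_one]

theorem Matrix.reindex_blockExtend_transpose_mul_mul [Fintype ι] [Fintype κ] [Fintype ν]
    [DecidableEq ν] [Semiring R] (e : ι ≃ κ ⊕ ν)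
    {Q B₁ : Matrix κ κ R} {D : Matrix ν ν R} {B : Matrix ι ι R}
    (hB : reindex e e B = fromBlocks B₁ 0 0 D) :
    reindex e e ((blockExtend e Q)ᵀ * B * blockExtend e Q) =
      fromBlocks (Qᵀ * B₁ * Q) 0 0 D := by
  obtain rfl : B = reindex e.symm e.symm (fromBlocks B₁ 0 0 D) := by
    rw [← hB, ← reindex_symm, Equiv.symm_apply_apply]
  simp only [blockExtend, reindex_apply, Equiv.symm_symm, transpose_submatrix,
    submatrix_mul_equiv, submatrix_submatrix, Equiv.self_comp_symm, submatrix_id_id]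
  simp [fromBlocks_transpose, fromBlocks_multiply]

end BlockExtend

open Classical in
noncomputable def Equiv.sumComplRange {α β : Type*} (f : α → β) (hf : Function.Injective f) :
    β ≃ α ⊕ {b // b ∉ Set.range f} :=
  (Equiv.sumCompl (· ∈ Set.range f)).symm.trans
    (Equiv.sumCongr (Equiv.ofInjective f hf).symm (Equiv.refl _))

@[simp]
theorem Equiv.sumComplRange_symm_inl {α β : Type*} (f : α → β) (hf : Function.Injective f)
    (a : α) :
    (Equiv.sumComplRange f hf).symm (Sum.inl a) = f a :=
  rfl

@[simp]
theorem Equiv.sumComplRange_symm_inr {α β : Type*} (f : α → β) (hf : Function.Injective f)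
    (b : {b // b ∉ Set.range f}) :
    (Equiv.sumComplRange f hf).symm (Sum.inr b) = b :=
  rfl

theorem Fin.mem_range_castLE_comp_natAdd {n k a : ℕ} (h : a + k ≤ n) (i : Fin n) :
    i ∈ Set.range (Fin.castLE h ∘ Fin.natAdd a) ↔ a ≤ i ∧ i < a + k := by
  constructor
  · rintro ⟨j, rfl⟩
    simp
  · intro hi
    exact ⟨⟨i - a, by omega⟩, Fin.ext (by simp; omega)⟩

theorem nfEntry_eq_zero_of_div_two_ne {r s t p i j : ℕ} (h : i / 2 ≠ j / 2) :
    nfEntry r s t p i j = 0 := by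
  unfold nfEntry; split_ifs <;> omega

theorem nfEntry_window {r s t p x y : ℕ} (hr : 2 ≤ r) (hx : x < 4) (hy : y < 4) :
    nfEntry r s t p (2 * (r - 2) + x) (2 * (r - 2) + y) = nfEntry 2 0 0 0 x y := by
  unfold nfEntry; split_ifs <;> omega

theorem nfEntry_sub_two_add_two_window {r s t p x y : ℕ} (hr : 2 ≤ r) (hx : x < 4)
    (hy : y < 4) :
    nfEntry (r - 2) (s + 2) t p (2 * (r - 2) + x) (2 * (r - 2) + y) = nfEntry 0 2 0 0 x y := by
  unfold nfEntry; split_ifs <;> omega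

theorem nfEntry_sub_two_add_two_of_not_mem_window {r s t p i j : ℕ} (hr : 2 ≤ r)
    (hj : ¬(2 * (r - 2) ≤ j ∧ j < 2 * (r - 2) + 4)) :
    nfEntry (r - 2) (s + 2) t p i j = nfEntry r s t p i j := by
  unfold nfEntry; split_ifs <;> omega

def nfMatrix (R : Type*) [IntCast R] (n r s t p : ℕ) : Matrix (Fin n) (Fin n) R :=
  of fun i j => (nfEntry r s t p i j : R)

noncomputable def windowEquiv {n : ℕ} (a k : ℕ) (h : a + k ≤ n) :
    Fin n ≃ Fin k ⊕ {i // i ∉ Set.range (Fin.castLE h ∘ Fin.natAdd a)} :=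
  Equiv.sumComplRange _ ((Fin.castLE_injective h).comp (Fin.natAdd_injective k a))

theorem div_two_ne_of_not_mem_window {c x j : ℕ} (hx : x < 4)
    (hj : ¬(2 * c ≤ j ∧ j < 2 * c + 4)) :
    (2 * c + x) / 2 ≠ j / 2 := by
  omega

theorem reindex_windowEquiv_nfMatrix {R : Type*} [AddGroupWithOne R] {n c : ℕ} (r s t p : ℕ)
    (h : 2 * c + 4 ≤ n) :
    reindex (windowEquiv _ 4 h) (windowEquiv _ 4 h) (nfMatrix R n r s t p) =
      fromBlocks ((nfMatrix R n r s t p).submatrix ((windowEquiv _ 4 h).symm ∘ Sum.inl)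
          ((windowEquiv _ 4 h).symm ∘ Sum.inl)) 0 0
        ((nfMatrix R n r s t p).submatrix ((windowEquiv _ 4 h).symm ∘ Sum.inr)
          ((windowEquiv _ 4 h).symm ∘ Sum.inr)) := by
  ext (x | i) (y | j)
  · simp [windowEquiv]
  · have hj := (Fin.mem_range_castLE_comp_natAdd h j).not.mp j.2
    simp [windowEquiv, nfMatrix,
      nfEntry_eq_zero_of_div_two_ne (div_two_ne_of_not_mem_window x.2 hj)]
  · have hi := (Fin.mem_range_castLE_comp_natAdd h i).not.mp i.2
    simp [windowEquiv, nfMatrix,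
      nfEntry_eq_zero_of_div_two_ne (div_two_ne_of_not_mem_window y.2 hi).symm]
  · simp [windowEquiv]

section Window

variable {R : Type*} [IntCast R] {n r : ℕ} (s t p : ℕ)

theorem nfMatrix_submatrix_window (hr : 2 ≤ r) (h : 2 * (r - 2) + 4 ≤ n) :
    (nfMatrix R n r s t p).submatrix ((windowEquiv _ 4 h).symm ∘ Sum.inl)
        ((windowEquiv _ 4 h).symm ∘ Sum.inl) = nfMatrix R 4 2 0 0 0 := by
  ext x y
  simp [windowEquiv, nfMatrix, nfEntry_window hr x.2 y.2]

theorem nfMatrix_sub_two_add_two_submatrix_window (hr : 2 ≤ r) (h : 2 * (r - 2) + 4 ≤ n) :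
    (nfMatrix R n (r - 2) (s + 2) t p).submatrix ((windowEquiv _ 4 h).symm ∘ Sum.inl)
        ((windowEquiv _ 4 h).symm ∘ Sum.inl) = nfMatrix R 4 0 2 0 0 := by
  ext x y
  simp [windowEquiv, nfMatrix, nfEntry_sub_two_add_two_window hr x.2 y.2]

theorem nfMatrix_sub_two_add_two_submatrix_compl (hr : 2 ≤ r) (h : 2 * (r - 2) + 4 ≤ n) :
    (nfMatrix R n (r - 2) (s + 2) t p).submatrix ((windowEquiv _ 4 h).symm ∘ Sum.inr)
        ((windowEquiv _ 4 h).symm ∘ Sum.inr) =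
      (nfMatrix R n r s t p).submatrix ((windowEquiv _ 4 h).symm ∘ Sum.inr)
        ((windowEquiv _ 4 h).symm ∘ Sum.inr) := by
  ext i j
  simp only [windowEquiv, submatrix_apply, Function.comp_apply, Equiv.sumComplRange_symm_inr]
  have hj := (Fin.mem_range_castLE_comp_natAdd h j).not.mp j.2
  simp [nfMatrix, nfEntry_sub_two_add_two_of_not_mem_window hr hj]

end Window

def twoBlockChange : Matrix (Fin 4) (Fin 4) ℤ :=
  !![1, 2, 1, 1; 0, -1, -1, -1; 2, 2, -1, -1; 1, -1, -1, 0]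

theorem det_twoBlockChange : twoBlockChange.det = 1 := by
  simp [twoBlockChange, det_succ_row_zero, Fin.sum_univ_succ, Fin.succAbove]

theorem twoBlockChange_transpose_mul_mul_mod_four :
    (twoBlockChange.map (Int.castRingHom (ZMod 4)))ᵀ * nfMatrix (ZMod 4) 4 2 0 0 0 *
        twoBlockChange.map (Int.castRingHom (ZMod 4)) = nfMatrix (ZMod 4) 4 0 2 0 0 := by
  decide

open Matrix in
theorem stmt_5_general (n r s t p m : ℕ) (A : Matrix (Fin n) (Fin n) ℤ)
    (hn : n = 2*r + 2*s + 2*t + p + m)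
    (hge : 2 ≤ r)
    (hA : ∀ i j : Fin n,
      ((A i j : ℤ) : ZMod 4) = ((nfEntry r s t p (i : ℕ) (j : ℕ) : ℤ) : ZMod 4)) :
    ∃ P : Matrix (Fin n) (Fin n) ℤ, (P.det = 1 ∨ P.det = -1) ∧
      ∀ i j : Fin n,
        (((Pᵀ * A * P) i j : ℤ) : ZMod 4) = ((nfEntry (r-2) (s+2) t p (i : ℕ) (j : ℕ) : ℤ) : ZMod 4) := by
  have h : 2 * (r - 2) + 4 ≤ n := by omega
  set e := windowEquiv _ 4 h
  refine ⟨blockExtend e twoBlockChange, Or.inl (by rw [det_blockExtend, det_twoBlockChange]),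
    fun i j => ?_⟩
  have hAmod : A.map (Int.castRingHom (ZMod 4)) = nfMatrix (ZMod 4) n r s t p := Matrix.ext hA
  have hcongr : reindex e e
      (((blockExtend e twoBlockChange)ᵀ * A * blockExtend e twoBlockChange).map
        (Int.castRingHom (ZMod 4))) = reindex e e (nfMatrix (ZMod 4) n (r - 2) (s + 2) t p) := by
    rw [Matrix.map_mul, Matrix.map_mul, transpose_map, hAmod, map_blockExtend,
      reindex_blockExtend_transpose_mul_mul e (reindex_windowEquiv_nfMatrix r s t p h),
      nfMatrix_submatrix_window s t p hge, twoBlockChange_transpose_mul_mul_mod_four,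
      reindex_windowEquiv_nfMatrix, nfMatrix_sub_two_add_two_submatrix_window s t p hge,
      nfMatrix_sub_two_add_two_submatrix_compl s t p hge]
  simpa [nfMatrix] using congrFun₂ ((reindex e e).injective hcongr) i j

open Matrix in
/-- Lemma 2.4: if r ≥ 2 then two blocks [[2,1],[1,2]] can be traded for two blocks [[0,1],[1,0]]. -/
theorem stmt_5 (n r s t p m : ℕ) (A : Matrix (Fin n) (Fin n) ℤ)
    (hsym : A.IsSymm)
    (hn : n = 2*r + 2*s + 2*t + p + m)
    (hge : 2 ≤ r)
    (hA : ∀ i j : Fin n,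
      ((A i j : ℤ) : ZMod 4) = ((nfEntry r s t p (i : ℕ) (j : ℕ) : ℤ) : ZMod 4)) :
    ∃ P : Matrix (Fin n) (Fin n) ℤ, (P.det = 1 ∨ P.det = -1) ∧
      ∀ i j : Fin n,
        (((Pᵀ * A * P) i j : ℤ) : ZMod 4) = ((nfEntry (r-2) (s+2) t p (i : ℕ) (j : ℕ) : ℤ) : ZMod 4) :=
  stmt_5_general n r s t p m A hn hge hA
end

section
/- Let A be a symmetric n×n integer matrix with even diagonal entries and let Ā = A mod 2. If rank(Ā) ≤ n − 2, then det(A) ≡ 0 mod 4. -/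
/-!
For any integer matrix `A` and prime `p`, `p ^ (n - rank (A mod p))` divides `det A`.
Extend a basis of the kernel of `A mod p` to a basis of `(ℤ/p)ⁿ` and lift the basis matrix
to an integer matrix `U`. Then `det U` is prime to `p`, while `A * U` has `n - rank` columns
divisible by `p`, so `p ^ (n - rank)` divides `det (A * U) = det A * det U`.
-/

open Matrix

theorem Module.Basis.sumExtend_apply_inl {K V ι : Type*} [DivisionRing K] [AddCommGroup V]
    [Module K V] {v : ι → V} (hs : LinearIndependent K v) (i : ι) :
    Module.Basis.sumExtend hs (Sum.inl i) = v i := by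
  simp only [Module.Basis.sumExtend, Module.Basis.reindex_apply, Module.Basis.extend_apply_self]
  rfl

namespace Matrix

variable {ι : Type*} [Fintype ι] [DecidableEq ι]

theorem pow_card_dvd_det_of_dvd_cols {R : Type*} [CommRing R] (M : Matrix ι ι R) (d : R)
    (s : Finset ι) (h : ∀ c ∈ s, ∀ r, d ∣ M r c) : d ^ s.card ∣ M.det := by
  choose N hN using h
  let M' : Matrix ι ι R := of fun r c => if hc : c ∈ s then N c hc r else M r c
  have hM : M = M' * diagonal (fun c => if c ∈ s then d else 1) := by
    ext r c
    by_cases hc : c ∈ s <;> simp [M', hc, hN, mul_comm]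
  refine ⟨M'.det, ?_⟩
  rw [hM, det_mul, det_diagonal, Finset.prod_ite_mem, Finset.univ_inter, Finset.prod_const,
    mul_comm]

theorem exists_isUnit_det_mul_apply_eq_zero {F : Type*} [Field F] (B : Matrix ι ι F) :
    ∃ V : Matrix ι ι F, IsUnit V.det ∧
      ∃ s : Finset ι, s.card = Fintype.card ι - B.rank ∧
        ∀ c ∈ s, ∀ r, (B * V) r c = 0 := by
  have hK : Module.finrank F (LinearMap.ker B.mulVecLin) = Fintype.card ι - B.rank := by
    have := LinearMap.finrank_range_add_finrank_ker B.mulVecLin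
    rw [Module.finrank_fintype_fun_eq_card] at this
    unfold rank
    omega
  set K := LinearMap.ker B.mulVecLin
  let bK := Module.finBasis F K
  have hli : LinearIndependent F fun i => (bK i : ι → F) :=
    bK.linearIndependent.map' K.subtype K.ker_subtype
  let b₀ := Module.Basis.sumExtend hli
  let e := b₀.indexEquiv (Pi.basisFun F ι)
  let b := b₀.reindex e
  have := (Pi.basisFun F ι).invertibleToMatrix b
  refine ⟨(Pi.basisFun F ι).toMatrix b, isUnit_det_of_invertible _,
    Finset.univ.map (Function.Embedding.inl.trans e.toEmbedding), by simp [hK], ?_⟩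
  simp only [Finset.mem_map, Finset.mem_univ, true_and, forall_exists_index]
  rintro _ i rfl r
  have hb_inl : b (e (Sum.inl i)) = bK i := by
    simp [b, b₀, Module.Basis.sumExtend_apply_inl]
  have hker : B *ᵥ (bK i : ι → F) = 0 := (bK i).2
  simpa [mul_apply, mulVec, dotProduct, Module.Basis.toMatrix_apply, hb_inl] using congrFun hker r

theorem prime_pow_card_sub_rank_dvd_det (p : ℕ) [Fact p.Prime] (A : Matrix ι ι ℤ) :
    (p : ℤ) ^ (Fintype.card ι - (A.map (Int.cast : ℤ → ZMod p)).rank) ∣ A.det := by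
  obtain ⟨V, hV, s, hs, hcol⟩ :=
    exists_isUnit_det_mul_apply_eq_zero (A.map (Int.cast : ℤ → ZMod p))
  let U : Matrix ι ι ℤ := V.map fun x => (x.val : ℤ)
  have hU : U.map (Int.cast : ℤ → ZMod p) = V := by ext; simp [U]
  have hAU : (p : ℤ) ^ s.card ∣ (A * U).det := by
    refine pow_card_dvd_det_of_dvd_cols _ _ s fun c hc r => ?_
    rw [← ZMod.intCast_zmod_eq_zero_iff_dvd, ← eq_intCast (Int.castRingHom (ZMod p)),
      RingHom.map_matrix_mul]
    exact hU ▸ hcol c hc r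
  have hUdet : ¬ (p : ℤ) ∣ U.det := by
    rw [← ZMod.intCast_zmod_eq_zero_iff_dvd, Int.cast_det, hU]
    exact hV.ne_zero
  rw [← hs]
  exact (Nat.prime_iff_prime_int.mp Fact.out).pow_dvd_of_dvd_mul_right _ hUdet
    (by rwa [← det_mul])

end Matrix

theorem stmt_14_general (n : ℕ) (A : Matrix (Fin n) (Fin n) ℤ)
    (hrank : (A.map (Int.cast : ℤ → ZMod 2)).rank + 2 ≤ n) :
    ((A.det : ℤ) : ZMod 4) = 0 := by
  have h := prime_pow_card_sub_rank_dvd_det 2 A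
  rw [Fintype.card_fin] at h
  have h4 : (4 : ℤ) ∣ A.det := (pow_dvd_pow (2 : ℤ) (by omega : 2 ≤ _)).trans h
  exact_mod_cast (ZMod.intCast_zmod_eq_zero_iff_dvd _ 4).2 h4

/-- Corollary 1.3 (last claim): if rank of A mod 2 is at most n-2,
then det(A) ≡ 0 (mod 4). -/
theorem stmt_14 (n : ℕ) (A : Matrix (Fin n) (Fin n) ℤ)
    (hsym : A.IsSymm) (hdiag : ∀ i, Even (A i i))
    (hrank : (A.map (Int.cast : ℤ → ZMod 2)).rank + 2 ≤ n) :
    ((A.det : ℤ) : ZMod 4) = 0 :=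
  stmt_14_general n A hrank
end

section
/- Let A be a symmetric n×n integer matrix with even diagonal entries, where n ≡ 0 mod 4. Then either det(A) ≡ 1 mod 4 (if A mod 2 has rank n over 𝔽₂) or det(A) ≡ 0 mod 4 (otherwise). Similarly, if n ≡ 2 mod 4, then det(A) ≡ −1 mod 4 if A mod 2 has full rank, and det(A) ≡ 0 mod 4 otherwise. -/
/-!
Write `A = N + Nᵀ`; this shape (symmetric with even diagonal) is preserved by congruences
`Cᵀ * A * C`, hence by Schur complements. Work over `ZMod 4`. If every entry of `A` is even,
then `A = 2 • A'` and `det A = 2 ^ n * det A' = 0`. Otherwise some off-diagonal entry `b` is odd,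
the block `!![2a, b; b, 2c]` has determinant `-b² = -1`, and its Schur complement `S` has the same
shape and size `n - 2`, so `det A = -det S`; by induction `det A ∈ {0, (-1) ^ (n / 2)}`.
The two cases are told apart by the parity of `det A`, i.e. by whether `A mod 2` is invertible.
-/

open Matrix

theorem ZMod.mul_self_eq_one_of_not_even {x : ZMod 4} (h : ¬Even x) : x * x = 1 := by
  revert x
  unfold Even
  decide

theorem ZMod.intCast_four_eq_unit_iff {d : ℤ} {u : ZMod 4} (hu : IsUnit u)
    (hd : (d : ZMod 4) = 0 ∨ (d : ZMod 4) = u) : (d : ZMod 4) = u ↔ (d : ZMod 2) ≠ 0 := by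
  have hcast : ((d : ZMod 4).cast : ZMod 2) = d := ZMod.cast_intCast (by norm_num) d
  have hu2 : (u.cast : ZMod 2) ≠ 0 := (hu.map (ZMod.castHom (by norm_num : 2 ∣ 4) (ZMod 2))).ne_zero
  rw [← hcast]
  rcases hd with h | h <;> rw [h]
  · exact iff_of_false (by rintro rfl; simp at hu2) (by simp)
  · exact iff_of_true rfl hu2

namespace Matrix

variable {ι κ R : Type*}

/-- Over `ℤ` these are exactly the symmetric matrices with even diagonal
(`isEvenSymm_of_isSymm`); the form `N + Nᵀ` makes stability under congruence evident. -/
def IsEvenSymm [Add R] (A : Matrix ι ι R) : Prop :=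
  ∃ N : Matrix ι ι R, A = N + Nᵀ

theorem isEvenSymm_of_isSymm [AddMonoid R] [LinearOrder ι] {A : Matrix ι ι R} (hA : A.IsSymm)
    (hdiag : ∀ i, Even (A i i)) : A.IsEvenSymm := by
  choose d hd using hdiag
  refine ⟨of fun i j => if i < j then A i j else if i = j then d i else 0, ?_⟩
  ext i j
  rcases lt_trichotomy i j with h | rfl | h
  · simp [h, h.not_gt, h.ne']
  · simp [hd]
  · simp [h, h.not_gt, h.ne', hA.apply i j]

namespace IsEvenSymm

theorem isSymm [AddCommMagma R] {A : Matrix ι ι R} (hA : A.IsEvenSymm) : A.IsSymm := by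
  obtain ⟨N, rfl⟩ := hA
  simp [IsSymm, add_comm]

theorem even_apply_self [Add R] {A : Matrix ι ι R} (hA : A.IsEvenSymm) (i : ι) : Even (A i i) := by
  obtain ⟨N, rfl⟩ := hA
  exact ⟨N i i, rfl⟩

theorem map {S F : Type*} [Add R] [Add S] [FunLike F R S] [AddHomClass F R S] {A : Matrix ι ι R}
    (hA : A.IsEvenSymm) (f : F) : (A.map f).IsEvenSymm := by
  obtain ⟨N, rfl⟩ := hA
  exact ⟨N.map f, by ext; simp [map_add]⟩

theorem submatrix [Add R] {A : Matrix ι ι R} (hA : A.IsEvenSymm) (e : κ → ι) :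
    (A.submatrix e e).IsEvenSymm := by
  obtain ⟨N, rfl⟩ := hA
  exact ⟨N.submatrix e e, rfl⟩

theorem sub [AddCommGroup R] {A B : Matrix ι ι R} (hA : A.IsEvenSymm) (hB : B.IsEvenSymm) :
    (A - B).IsEvenSymm := by
  obtain ⟨N, rfl⟩ := hA
  obtain ⟨M, rfl⟩ := hB
  exact ⟨N - M, by rw [transpose_sub]; abel⟩

theorem transpose_mul_mul [Fintype ι] [CommSemiring R] {A : Matrix ι ι R} (hA : A.IsEvenSymm)
    (C : Matrix ι κ R) : (Cᵀ * A * C).IsEvenSymm := by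
  obtain ⟨N, rfl⟩ := hA
  exact ⟨Cᵀ * N * C, by simp [Matrix.mul_add, Matrix.add_mul, transpose_mul, Matrix.mul_assoc]⟩

/-- The Schur complement is again of this form: since `⅟B` is symmetric,
`Cᵀ * ⅟B * C` is the congruence `(⅟B * C)ᵀ * B * (⅟B * C)`. -/
theorem schur_complement [Fintype ι] [DecidableEq ι] [CommRing R] {B : Matrix ι ι R}
    [Invertible B] {D : Matrix κ κ R} (hB : B.IsEvenSymm) (hD : D.IsEvenSymm) (C : Matrix ι κ R) :
    (D - Cᵀ * ⅟B * C).IsEvenSymm := by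
  have hsymm : (⅟B)ᵀ = ⅟B := by
    refine (invOf_eq_left_inv ?_).symm
    calc (⅟B)ᵀ * B = (⅟B)ᵀ * Bᵀ := by rw [hB.isSymm.eq]
      _ = 1 := by rw [← transpose_mul, mul_invOf_self, transpose_one]
  have hcongr : Cᵀ * ⅟B * C = (⅟B * C)ᵀ * B * (⅟B * C) := by
    rw [transpose_mul, hsymm, Matrix.mul_assoc _ B, ← Matrix.mul_assoc B, mul_invOf_self,
      Matrix.one_mul]
  rw [hcongr]
  exact hD.sub (hB.transpose_mul_mul _)

end IsEvenSymm

theorem det_fin_two_eq_neg_one_of_isEvenSymm {B : Matrix (Fin 2) (Fin 2) (ZMod 4)}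
    (hB : B.IsEvenSymm) (h01 : ¬Even (B 0 1)) : B.det = -1 := by
  have hsq := ZMod.mul_self_eq_one_of_not_even h01
  obtain ⟨N, rfl⟩ := hB
  have h4 : (4 : ZMod 4) = 0 := rfl
  simp only [det_fin_two, add_apply, transpose_apply] at hsq ⊢
  linear_combination (N 0 0 * N 1 1) * h4 - hsq

theorem IsEvenSymm.exists_det_eq_neg_det [Fintype κ] [DecidableEq κ]
    {A : Matrix (Fin 2 ⊕ κ) (Fin 2 ⊕ κ) (ZMod 4)} (hA : A.IsEvenSymm)
    (h01 : ¬Even (A (Sum.inl 0) (Sum.inl 1))) :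
    ∃ S : Matrix κ κ (ZMod 4), S.IsEvenSymm ∧ A.det = -S.det := by
  have hB : A.toBlocks₁₁.IsEvenSymm := hA.submatrix Sum.inl
  have hdetB : A.toBlocks₁₁.det = -1 := det_fin_two_eq_neg_one_of_isEvenSymm hB h01
  have := (A.toBlocks₁₁.isUnit_iff_isUnit_det.mpr (hdetB ▸ isUnit_one.neg)).invertible
  have hC : A.toBlocks₂₁ = A.toBlocks₁₂ᵀ := by
    ext i j
    exact (hA.isSymm.apply _ _).symm
  refine ⟨_, hB.schur_complement (hA.submatrix Sum.inr) A.toBlocks₁₂, ?_⟩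
  conv_lhs => rw [← fromBlocks_toBlocks A]
  rw [det_fromBlocks₁₁, hdetB, ← hC, neg_one_mul]
  rfl

theorem det_eq_zero_of_forall_even [Fintype ι] [DecidableEq ι] {A : Matrix ι ι (ZMod 4)}
    (hA : ∀ i j, Even (A i j)) (hι : 2 ≤ Fintype.card ι) : A.det = 0 := by
  choose N hN using hA
  have hA2 : A = (2 : ZMod 4) • of N := by
    ext i j
    simp [hN, two_mul]
  obtain ⟨k, hk⟩ : ∃ k, Fintype.card ι = k + 2 := ⟨_, (Nat.sub_add_cancel hι).symm⟩
  rw [hA2, det_smul, hk, pow_add]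
  exact mul_eq_zero_of_left (mul_eq_zero_of_right _ rfl) _

theorem IsEvenSymm.det_eq_zero_or_eq_neg_one_pow [Fintype ι] [DecidableEq ι]
    {A : Matrix ι ι (ZMod 4)} (hA : A.IsEvenSymm) (hι : Even (Fintype.card ι)) :
    A.det = 0 ∨ A.det = (-1) ^ (Fintype.card ι / 2) := by
  induction hm : Fintype.card ι using Nat.strong_induction_on generalizing ι with
  | _ m ih =>
  by_cases hodd : ∃ i j, ¬Even (A i j)
  · obtain ⟨i, j, hij⟩ := hodd
    have hne : i ≠ j := by rintro rfl; exact hij (hA.even_apply_self i)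
    have hinj : Function.Injective ![i, j] := by
      intro a b; fin_cases a <;> fin_cases b <;> simp [hne, hne.symm]
    let e := (Equiv.sumCongr (Equiv.ofInjective _ hinj) (Equiv.refl _)).trans
      (Equiv.sumCompl (· ∈ Set.range ![i, j]))
    obtain ⟨S, hS, hdet⟩ := (hA.submatrix e).exists_det_eq_neg_det hij
    have hcard : Fintype.card {x // x ∉ Set.range ![i, j]} + 2 = m := by
      simpa [add_comm] using (Fintype.card_congr e).trans hm
    rw [← det_submatrix_equiv_self e, hdet]
    rcases ih _ (by omega) hS (by grind) rfl with h0 | h1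
    · simp [h0]
    · right
      rw [h1, ← hcard, Nat.add_div_right _ two_pos, pow_succ, mul_neg_one]
  · simp only [not_exists, not_not] at hodd
    obtain rfl | hpos := Nat.eq_zero_or_pos m
    · have := Fintype.card_eq_zero_iff.mp hm
      simp
    · exact Or.inl (det_eq_zero_of_forall_even hodd (by grind))

theorem rank_eq_card_iff_det_ne_zero {K : Type*} [Field K] [Fintype ι] [DecidableEq ι]
    (A : Matrix ι ι K) : A.rank = Fintype.card ι ↔ A.det ≠ 0 := by
  rw [← isUnit_iff_ne_zero, ← isUnit_iff_isUnit_det, ← mulVec_surjective_iff_isUnit,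
    ← coe_mulVecLin, ← LinearMap.range_eq_top, rank, ← Module.finrank_fintype_fun_eq_card K]
  exact ⟨Submodule.eq_top_of_finrank_eq, fun h => by rw [h, finrank_top]⟩

end Matrix

/-- Corollary 1.3 (even n): if n ≡ 0 (mod 4) then det(A) ≡ 1 or 0 (mod 4), and
if n ≡ 2 (mod 4) then det(A) ≡ -1 or 0 (mod 4), according to whether
A mod 2 has full rank or not. -/
theorem stmt_15 (n : ℕ) (A : Matrix (Fin n) (Fin n) ℤ)
    (hsym : A.IsSymm) (hdiag : ∀ i, Even (A i i)) :
    (n % 4 = 0 →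
      (if (A.map (Int.cast : ℤ → ZMod 2)).rank = n
        then ((A.det : ℤ) : ZMod 4) = 1 else ((A.det : ℤ) : ZMod 4) = 0)) ∧
    (n % 4 = 2 →
      (if (A.map (Int.cast : ℤ → ZMod 2)).rank = n
        then ((A.det : ℤ) : ZMod 4) = -1 else ((A.det : ℤ) : ZMod 4) = 0)) := by
  have hrank : (A.map (Int.cast : ℤ → ZMod 2)).rank = n ↔ ((A.det : ℤ) : ZMod 2) ≠ 0 := by
    simpa [Int.cast_det] using rank_eq_card_iff_det_ne_zero (A.map (Int.cast : ℤ → ZMod 2))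
  have hdet (hn : Even n) :
      ((A.det : ℤ) : ZMod 4) = 0 ∨ ((A.det : ℤ) : ZMod 4) = (-1) ^ (n / 2) := by
    have hA := (isEvenSymm_of_isSymm hsym hdiag).map (Int.castRingHom (ZMod 4))
    simpa [Int.cast_det] using hA.det_eq_zero_or_eq_neg_one_pow (by simpa using hn)
  have key (u : ZMod 4) (hu : IsUnit u)
      (hd : ((A.det : ℤ) : ZMod 4) = 0 ∨ ((A.det : ℤ) : ZMod 4) = u) :
      if (A.map (Int.cast : ℤ → ZMod 2)).rank = n
        then ((A.det : ℤ) : ZMod 4) = u else ((A.det : ℤ) : ZMod 4) = 0 := by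
    have hunit := ZMod.intCast_four_eq_unit_iff hu hd
    split_ifs with h
    · exact hunit.mpr (hrank.mp h)
    · exact hd.resolve_right fun h' => h (hrank.mpr (hunit.mp h'))
  refine ⟨fun h4 => key 1 isUnit_one ?_, fun h4 => key (-1) isUnit_one.neg ?_⟩
  · have := hdet (Nat.even_iff.mpr (by omega))
    rwa [(Nat.even_iff.mpr (by omega : n / 2 % 2 = 0)).neg_one_pow] at this
  · have := hdet (Nat.even_iff.mpr (by omega))
    rwa [(Nat.odd_iff.mpr (by omega : n / 2 % 2 = 1)).neg_one_pow] at this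
end

section
/- Let A and A' be symmetric n×n integer matrices with even diagonal entries such that A mod 2 and A' mod 2 have the same rank over 𝔽₂ and the associated 𝔽₂-quadratic forms q_A and q_{A'} are isomorphic. Then det(A) ≡ det(A') mod 4. -/
/-!
Lift the isometry `T` to an integer matrix `X`; its determinant is odd, and odd squares are
`1 mod 4`, so `B = Xᵀ A X` has `det B ≡ det A (mod 4)`. Since `q_B = q_{A'}`, the difference
`B - A'` is `2C` with `C` symmetric of even diagonal. To first order,
`det (A' + 2C) ≡ det A' + 2 ∑ₖ det (A' with row k replaced by Cₖ) (mod 4)`, and that sum is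
`∑ₖⱼ adj(A')ₖⱼ Cₖⱼ`, which is even: both factors are symmetric, so modulo 2 the off-diagonal
terms cancel in pairs, and the diagonal terms vanish because `C` has even diagonal.
-/

open Matrix in
/-- The quadratic form over `𝔽₂` associated with a symmetric integer matrix `A`
with even diagonal entries: `q(v) = (ṽᵀ A ṽ)/2 (mod 2)`, computed on the
canonical integer lift `ṽ` of `v` (it is independent of the chosen lift). -/
def qf {n : ℕ} (A : Matrix (Fin n) (Fin n) ℤ) (v : Fin n → ZMod 2) : ZMod 2 :=
  ((((fun i => ((v i).val : ℤ)) ⬝ᵥ A.mulVec (fun i => ((v i).val : ℤ))) / 2 : ℤ) : ZMod 2)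

open Matrix

theorem CharTwo.sum_sum_eq_zero_of_symm {R ι : Type*} [CommRing R] [CharP R 2] [Fintype ι]
    (F : ι → ι → R) (hs : ∀ i j, F i j = F j i) (hd : ∀ i, F i i = 0) :
    ∑ i, ∑ j, F i j = 0 := by
  rw [← Finset.sum_product']
  refine Finset.sum_ninvolution Prod.swap (fun p => ?_) (fun ⟨i, j⟩ hF hij => hF ?_)
    (fun _ => Finset.mem_univ _) (fun _ => rfl)
  · rw [Prod.fst_swap, Prod.snd_swap, hs p.2 p.1, CharTwo.add_self_eq_zero]
  · obtain rfl : j = i := congrArg Prod.fst hij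
    exact hd j

section Det

variable {R n : Type*} [CommRing R] [Fintype n] [DecidableEq n]

theorem Matrix.dvd_det_add_smul_sub_det (M C : Matrix n n R) (e : R) :
    e ∣ (M + e • C).det - M.det := by
  rw [← Ideal.mem_span_singleton, ← Ideal.Quotient.eq, RingHom.map_det, RingHom.map_det]
  congr 1
  ext i j
  simp

theorem Matrix.sq_dvd_det_add_smul_sub_det_sub_sum (M C : Matrix n n R) (e : R) :
    e ^ 2 ∣ (M + e • C).det - M.det - e * ∑ k, (M.updateRow k (C k)).det := by
  let rows (S : Finset n) : Matrix n n R := of fun i j => if i ∈ S then C i j else 0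
  suffices ∀ S : Finset n,
      e ^ 2 ∣ (M + e • rows S).det - M.det - e * ∑ k ∈ S, (M.updateRow k (C k)).det by
    convert this Finset.univ
    ext i j
    simp [rows]
  intro S
  induction S using Finset.induction_on with
  | empty =>
    have hrows : rows ∅ = 0 := by ext i j; simp [rows]
    simp [hrows]
  | insert a S ha ih =>
    have hrowa : rows S a = 0 := by ext j; simp [rows, ha]
    have hupd : M + e • rows (insert a S) =
        (M + e • rows S).updateRow a ((M + e • rows S) a + e • C a) := by
      ext i j
      by_cases hi : i = a
      · subst hi; simp [rows, ha]
      · simp [rows, hi]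
    have hcorr : e ∣ ((M + e • rows S).updateRow a (C a)).det - (M.updateRow a (C a)).det := by
      have hsplit : (M + e • rows S).updateRow a (C a) = M.updateRow a (C a) + e • rows S := by
        ext i j
        by_cases hi : i = a
        · subst hi; simp [hrowa]
        · simp [hi]
      rw [hsplit]
      exact dvd_det_add_smul_sub_det _ _ e
    rw [hupd, det_updateRow_add, det_updateRow_smul, updateRow_eq_self, Finset.sum_insert ha]
    obtain ⟨c, hc⟩ := hcorr
    obtain ⟨d, hd⟩ := ih
    exact ⟨d + c, by linear_combination hd + e * hc⟩

theorem Matrix.IsSymm.sum_det_updateRow_eq_zero [CharP R 2] {M C : Matrix n n R}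
    (hM : M.IsSymm) (hC : C.IsSymm) (hCd : ∀ i, C i i = 0) :
    ∑ k, (M.updateRow k (C k)).det = 0 := by
  simp_rw [← cramer_transpose_apply, hM.eq, cramer_eq_adjugate_mulVec, mulVec, dotProduct]
  refine CharTwo.sum_sum_eq_zero_of_symm _ (fun k j => ?_) (fun k => by simp [hCd])
  rw [hM.adjugate.apply k j, hC.apply k j]

theorem Matrix.IsSymm.four_dvd_det_add_two_smul_sub_det {M C : Matrix n n ℤ} (hM : M.IsSymm)
    (hC : C.IsSymm) (hCd : ∀ i, Even (C i i)) :
    4 ∣ (M + (2 : ℤ) • C).det - M.det := by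
  have hexp := sq_dvd_det_add_smul_sub_det_sub_sum M C 2
  have hpar : 2 ∣ ∑ k, (M.updateRow k (C k)).det := by
    rw [← even_iff_two_dvd, ← ZMod.intCast_eq_zero_iff_even]
    have hmod2 := (hM.map (Int.cast : ℤ → ZMod 2)).sum_det_updateRow_eq_zero
      (hC.map (Int.cast : ℤ → ZMod 2)) (fun i => ZMod.intCast_eq_zero_iff_even.mpr (hCd i))
    push_cast [RingHom.map_det (Int.castRingHom (ZMod 2))]
    convert hmod2 using 2 with k
    rw [map_updateRow]
    rfl
  rw [show (2 : ℤ) ^ 2 = 4 by norm_num] at hexp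
  omega

end Det

section QuadraticForm

variable {n : ℕ}

theorem Matrix.IsSymm.even_dotProduct_mulVec {A : Matrix (Fin n) (Fin n) ℤ} (hA : A.IsSymm)
    (hdiag : ∀ i, Even (A i i)) (w : Fin n → ℤ) : Even (w ⬝ᵥ A *ᵥ w) := by
  rw [← ZMod.intCast_eq_zero_iff_even]
  push_cast [dotProduct, mulVec, Finset.mul_sum]
  refine CharTwo.sum_sum_eq_zero_of_symm _ (fun i j => ?_) (fun i => ?_)
  · rw [hA.apply j i]; ring
  · rw [ZMod.intCast_eq_zero_iff_even.mpr (hdiag i)]; ring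

theorem Matrix.IsSymm.even_transpose_mul_mul_apply_self {A : Matrix (Fin n) (Fin n) ℤ}
    (hA : A.IsSymm) (hdiag : ∀ i, Even (A i i)) (X : Matrix (Fin n) (Fin n) ℤ) (i : Fin n) :
    Even ((Xᵀ * A * X) i i) := by
  have hcol : (Xᵀ * A * X) i i = (fun j => X j i) ⬝ᵥ A *ᵥ (fun j => X j i) := by
    rw [Matrix.mul_assoc, mul_apply']
    rfl
  rw [hcol]
  exact hA.even_dotProduct_mulVec hdiag _

theorem Matrix.IsSymm.dotProduct_mulVec_add_two_smul {A : Matrix (Fin n) (Fin n) ℤ}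
    (hA : A.IsSymm) (w u : Fin n → ℤ) :
    (w + (2 : ℤ) • u) ⬝ᵥ A *ᵥ (w + (2 : ℤ) • u) =
      w ⬝ᵥ A *ᵥ w + 2 * (2 * (u ⬝ᵥ A *ᵥ w + u ⬝ᵥ A *ᵥ u)) := by
  have hcomm : w ⬝ᵥ A *ᵥ u = u ⬝ᵥ A *ᵥ w := by
    rw [dotProduct_mulVec, ← hA.eq, vecMul_transpose, hA.eq, dotProduct_comm]
  simp only [mulVec_add, mulVec_smul, add_dotProduct, dotProduct_add, smul_dotProduct,
    dotProduct_smul, smul_eq_mul, hcomm]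
  ring

theorem qf_eq_of_intCast_eq {A : Matrix (Fin n) (Fin n) ℤ} (hA : A.IsSymm) {v : Fin n → ZMod 2}
    (w : Fin n → ℤ) (hw : ∀ k, (w k : ZMod 2) = v k) :
    qf A v = ((w ⬝ᵥ A *ᵥ w / 2 : ℤ) : ZMod 2) := by
  set w₀ : Fin n → ℤ := fun k => ((v k).val : ℤ)
  have heven : ∀ k, Even (w k - w₀ k) := fun k => by
    rw [← ZMod.intCast_eq_zero_iff_even]
    simp [w₀, hw]
  choose u hu using heven
  have hw₀u : w = w₀ + (2 : ℤ) • u := by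
    ext k
    simp only [Pi.add_apply, Pi.smul_apply, smul_eq_mul]
    linarith [hu k]
  rw [qf, hw₀u, hA.dotProduct_mulVec_add_two_smul, Int.add_mul_ediv_left _ _ two_ne_zero]
  push_cast
  rw [show (2 : ZMod 2) = 0 from rfl, zero_mul, add_zero]

theorem qf_sub (A : Matrix (Fin n) (Fin n) ℤ) {A' : Matrix (Fin n) (Fin n) ℤ} (hA' : A'.IsSymm)
    (hdiag' : ∀ i, Even (A' i i)) (v : Fin n → ZMod 2) :
    qf (A - A') v = qf A v - qf A' v := by
  rw [qf, qf, qf, sub_mulVec, dotProduct_sub,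
    Int.sub_ediv_of_dvd _ (hA'.even_dotProduct_mulVec hdiag' _).two_dvd, Int.cast_sub]

theorem qf_transpose_mul_mul {A : Matrix (Fin n) (Fin n) ℤ} (hA : A.IsSymm)
    (X : Matrix (Fin n) (Fin n) ℤ) (v : Fin n → ZMod 2) :
    qf (Xᵀ * A * X) v = qf A (X.map (Int.cast : ℤ → ZMod 2) *ᵥ v) := by
  set w : Fin n → ℤ := fun k => ((v k).val : ℤ)
  have hXw : ∀ k, ((X *ᵥ w) k : ZMod 2) = (X.map (Int.cast : ℤ → ZMod 2) *ᵥ v) k := fun k => by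
    simp [w, mulVec, dotProduct]
  rw [qf_eq_of_intCast_eq hA _ hXw, qf, Matrix.mul_assoc, ← mulVec_mulVec, ← mulVec_mulVec,
    dotProduct_mulVec, vecMul_transpose]

theorem exists_eq_two_smul_of_qf_eq_zero {D : Matrix (Fin n) (Fin n) ℤ} (hD : D.IsSymm)
    (hdiag : ∀ i, Even (D i i)) (hq : ∀ v, qf D v = 0) :
    ∃ C : Matrix (Fin n) (Fin n) ℤ, C.IsSymm ∧ (∀ i, Even (C i i)) ∧ D = (2 : ℤ) • C := by
  have hcast (i k : Fin n) :
      ((Pi.single i 1 : Fin n → ℤ) k : ZMod 2) = (Pi.single i 1 : Fin n → ZMod 2) k := by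
    simp [Pi.single_apply]
  have hquad (i j : Fin n) : Pi.single i 1 ⬝ᵥ D *ᵥ Pi.single j 1 = D i j := by
    simp [mulVec_single, single_dotProduct]
  have hsingle (i : Fin n) : Even (D i i / 2) := by
    have := hq (Pi.single i 1)
    rwa [qf_eq_of_intCast_eq hD _ (hcast i), hquad, ZMod.intCast_eq_zero_iff_even] at this
  have hpair (i j : Fin n) : Even ((D i i + D j j + 2 * D i j) / 2) := by
    have := hq (Pi.single i 1 + Pi.single j 1)
    rw [qf_eq_of_intCast_eq hD (Pi.single i 1 + Pi.single j 1)
        (fun k => by simp only [Pi.add_apply, Int.cast_add, hcast]),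
      mulVec_add, dotProduct_add, add_dotProduct, add_dotProduct, hquad, hquad, hquad, hquad,
      hD.apply i j, ZMod.intCast_eq_zero_iff_even] at this
    convert this using 2
    ring
  have htwo (i j : Fin n) : 2 ∣ D i j := by
    have := (hpair i j).two_dvd
    have := (hsingle i).two_dvd
    have := (hsingle j).two_dvd
    have := (hdiag i).two_dvd
    have := (hdiag j).two_dvd
    omega
  refine ⟨of fun i j => D i j / 2, ?_, hsingle, ?_⟩
  · ext i j
    simp [hD.apply i j]
  · ext i j
    simp [Int.mul_ediv_cancel' (htwo i j)]

theorem LinearEquiv.exists_int_matrix_lift (T : (Fin n → ZMod 2) ≃ₗ[ZMod 2] (Fin n → ZMod 2)) :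
    ∃ X : Matrix (Fin n) (Fin n) ℤ, Odd X.det ∧ ∀ v, X.map (Int.cast : ℤ → ZMod 2) *ᵥ v = T v := by
  set X : Matrix (Fin n) (Fin n) ℤ :=
    (LinearMap.toMatrix' (T : (Fin n → ZMod 2) →ₗ[ZMod 2] _)).map fun a => (a.val : ℤ)
  have hX : X.map (Int.cast : ℤ → ZMod 2) = LinearMap.toMatrix' (T : _ →ₗ[ZMod 2] _) := by
    ext i j
    simp [X]
  refine ⟨X, ?_, fun v => by rw [hX, ← Matrix.toLin'_apply, Matrix.toLin'_toMatrix']; rfl⟩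
  have hdet : (X.det : ZMod 2) = LinearMap.det (T : (Fin n → ZMod 2) →ₗ[ZMod 2] _) := by
    rw [← LinearMap.det_toMatrix', ← hX]
    exact RingHom.map_det (Int.castRingHom (ZMod 2)) X
  rw [← Int.not_even_iff_odd, ← ZMod.intCast_eq_zero_iff_even, hdet]
  exact T.isUnit_det'.ne_zero

theorem four_dvd_det_transpose_mul_mul_sub_det {X : Matrix (Fin n) (Fin n) ℤ} (hX : Odd X.det)
    (A : Matrix (Fin n) (Fin n) ℤ) : 4 ∣ (Xᵀ * A * X).det - A.det := by
  have hsq := Int.sq_mod_four_eq_one_of_odd hX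
  rw [det_mul, det_mul, det_transpose,
    show X.det * A.det * X.det - A.det = (X.det ^ 2 - 1) * A.det by ring]
  exact Dvd.dvd.mul_right (by omega) _

end QuadraticForm

theorem stmt_17_general (n : ℕ) (A A' : Matrix (Fin n) (Fin n) ℤ)
    (hsym : A.IsSymm) (hdiag : ∀ i, Even (A i i))
    (hsym' : A'.IsSymm) (hdiag' : ∀ i, Even (A' i i))
    (hiso : ∃ T : (Fin n → ZMod 2) ≃ₗ[ZMod 2] (Fin n → ZMod 2),
      ∀ x : Fin n → ZMod 2, qf A (T x) = qf A' x) :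
    ((A.det : ℤ) : ZMod 4) = ((A'.det : ℤ) : ZMod 4) := by
  obtain ⟨T, hT⟩ := hiso
  obtain ⟨X, hXodd, hXT⟩ := T.exists_int_matrix_lift
  have hBsym : (Xᵀ * A * X).IsSymm := by
    simp [IsSymm, Matrix.transpose_mul, hsym.eq, Matrix.mul_assoc]
  have hq : ∀ v, qf (Xᵀ * A * X - A') v = 0 := fun v => by
    rw [qf_sub _ hsym' hdiag', qf_transpose_mul_mul hsym, hXT, hT, sub_self]
  obtain ⟨C, hC, hCd, hBC⟩ := exists_eq_two_smul_of_qf_eq_zero (hBsym.sub hsym')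
    (fun i => (hsym.even_transpose_mul_mul_apply_self hdiag X i).sub (hdiag' i)) hq
  have hBA' := hsym'.four_dvd_det_add_two_smul_sub_det hC hCd
  rw [← hBC, add_sub_cancel] at hBA'
  have hBA := four_dvd_det_transpose_mul_mul_sub_det hXodd A
  rw [ZMod.intCast_eq_intCast_iff_dvd_sub]
  omega

/-- Remark 1.4: if A mod 2 and A' mod 2 have the same rank and the associated
𝔽₂-quadratic forms are isomorphic, then det(A) ≡ det(A') (mod 4). -/
theorem stmt_17 (n : ℕ) (A A' : Matrix (Fin n) (Fin n) ℤ)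
    (hsym : A.IsSymm) (hdiag : ∀ i, Even (A i i))
    (hsym' : A'.IsSymm) (hdiag' : ∀ i, Even (A' i i))
    (hrank : (A.map (Int.cast : ℤ → ZMod 2)).rank = (A'.map (Int.cast : ℤ → ZMod 2)).rank)
    (hiso : ∃ T : (Fin n → ZMod 2) ≃ₗ[ZMod 2] (Fin n → ZMod 2),
      ∀ x : Fin n → ZMod 2, qf A (T x) = qf A' x) :
    ((A.det : ℤ) : ZMod 4) = ((A'.det : ℤ) : ZMod 4) :=
  stmt_17_general n A A' hsym hdiag hsym' hdiag' hiso
end
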